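/- arXiv:2407.03849 — 6 statements merged into one kernel-verified Lean document; each statement's English description precedes it below -/
import Mathlib

section
/- Let A be an m×n matrix of rank r, let X be an n×r matrix and Y an m×s matrix (s ≥ r) such that Y^T A X has rank r. Then the generalized Nyström approximant A X (Y^T A X)^† Y^T A equals A exactly. -/
open Matrix

noncomputable def spec {m n : Type*} [Fintype m] [Fintype n] [DecidableEq n]
    (A : Matrix m n ℝ) : ℝ :=
  ‖LinearMap.toContinuousLinearMap (Matrix.toEuclideanLin A)‖

noncomputable def frobM {m n : Type*} [Fintype m] [Fintype n] (A : Matrix m n ℝ) : ℝ :=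
  Real.sqrt (∑ i, ∑ j, (A i j)^2)

/-- Penrose conditions: `Ap` is the Moore–Penrose pseudoinverse of `A`. -/
def IsMP {m n : Type*} [Fintype m] [Fintype n] (A : Matrix m n ℝ) (Ap : Matrix n m ℝ) : Prop :=
  A * Ap * A = A ∧ Ap * A * Ap = Ap ∧ (A * Ap)ᵀ = A * Ap ∧ (Ap * A)ᵀ = Ap * A

abbrev Tensor {d : ℕ} (n : Fin d → ℕ) := ((i : Fin d) → Fin (n i)) → ℝ

noncomputable def frobT {d : ℕ} {n : Fin d → ℕ} (A : Tensor n) : ℝ :=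
  Real.sqrt (∑ idx, (A idx)^2)

def modeProd {d : ℕ} {n : Fin d → ℕ} (k : Fin d) {p : ℕ}
    (A : Tensor n) (X : Matrix (Fin p) (Fin (n k)) ℝ) :
    Tensor (Function.update n k p) :=
  fun idx => ∑ j : Fin (n k),
    X (Fin.cast (Function.update_self k p n) (idx k)) j *
      A (fun i => if h : i = k then Fin.cast (congrArg n h).symm j
                  else Fin.cast (Function.update_of_ne h p n) (idx i))

def modeProdSq {d : ℕ} {n : Fin d → ℕ} (k : Fin d)
    (A : Tensor n) (X : Matrix (Fin (n k)) (Fin (n k)) ℝ) : Tensor n :=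
  fun idx => ∑ j : Fin (n k), X (idx k) j * A (Function.update idx k j)

def applyUpTo {d : ℕ} {n : Fin d → ℕ} (P : ∀ k : Fin d, Matrix (Fin (n k)) (Fin (n k)) ℝ)
    (A : Tensor n) (m : ℕ) : Tensor n :=
  ((List.finRange d).take m).foldl (fun B i => modeProdSq i B (P i)) A

def matricize {d : ℕ} {n : Fin d → ℕ} (k : Fin d) (A : Tensor n) :
    Matrix (Fin (n k)) ((i : {i : Fin d // i ≠ k}) → Fin (n i)) ℝ :=
  fun a c => A (fun i => if h : i = k then Fin.cast (congrArg n h).symm a else c ⟨i, h⟩)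

def multiProd {d : ℕ} {n m : Fin d → ℕ} (A : Tensor n)
    (X : ∀ i, Matrix (Fin (m i)) (Fin (n i)) ℝ) : Tensor m :=
  fun idx => ∑ jdx : ∀ i, Fin (n i), (∏ i, X i (idx i) (jdx i)) * A jdx

def kronExcept {d : ℕ} {n m : Fin d → ℕ} (k : Fin d)
    (X : ∀ i, Matrix (Fin (m i)) (Fin (n i)) ℝ) :
    Matrix ((i : {i : Fin d // i ≠ k}) → Fin (m i)) ((i : {i : Fin d // i ≠ k}) → Fin (n i)) ℝ :=
  fun r c => ∏ i : {i : Fin d // i ≠ k}, X i.1 (r i) (c i)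

def kronAll {d : ℕ} {n m : Fin d → ℕ}
    (X : ∀ i, Matrix (Fin (m i)) (Fin (n i)) ℝ) :
    Matrix ((i : Fin d) → Fin (m i)) ((i : Fin d) → Fin (n i)) ℝ :=
  fun r c => ∏ i, X i (r i) (c i)

theorem stmt2 (m n r s : ℕ) (hs : r ≤ s)
    (A : Matrix (Fin m) (Fin n) ℝ) (X : Matrix (Fin n) (Fin r) ℝ)
    (Y : Matrix (Fin m) (Fin s) ℝ) (G : Matrix (Fin r) (Fin s) ℝ)
    (hA : A.rank = r) (hG : IsMP (Yᵀ * A * X) G) (hrank : (Yᵀ * A * X).rank = r) :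
    A * X * G * (Yᵀ * A) = A := by
  set B := Yᵀ * A * X with hB
  -- B has injective mulVec
  have hinj : Function.Injective (B.mulVec ·) := by
    have hinj' : Function.Injective B.mulVecLin := by
      rw [← LinearMap.ker_eq_bot]
      have h : Module.finrank ℝ (LinearMap.range B.mulVecLin)
          + Module.finrank ℝ (LinearMap.ker B.mulVecLin) = r := by
        simpa using LinearMap.finrank_range_add_finrank_ker B.mulVecLin
      have hfr : Module.finrank ℝ (LinearMap.range B.mulVecLin) = r := hrank
      rw [← Submodule.finrank_eq_zero (R := ℝ) (M := Fin r → ℝ)]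
      omega
    exact fun a b h => hinj' h
  -- G * B = 1
  have hGB : G * B = (1 : Matrix (Fin r) (Fin r) ℝ) := by
    have h1 : B * G * B = B := hG.1
    ext i j
    have h2 : B *ᵥ ((G * B) *ᵥ Pi.single j 1) = B *ᵥ Pi.single j (1 : ℝ) := by
      rw [Matrix.mulVec_mulVec, ← Matrix.mul_assoc, h1]
    have h3 := congrFun (hinj h2) i
    simpa [Matrix.mulVec, dotProduct, Pi.single_apply, mul_ite,
      Finset.sum_ite_eq', Matrix.one_apply] using h3
  -- rank (A * X) = r
  have hAX : (A * X).rank = r := by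
    have hle : (A * X).rank ≤ r := hA ▸ Matrix.rank_mul_le_left A X
    have hge : r ≤ (A * X).rank := by
      have h := Matrix.rank_mul_le_right Yᵀ (A * X)
      rw [← Matrix.mul_assoc, ← hB] at h
      omega
    omega
  -- range equality
  have hrange : LinearMap.range (A * X).mulVecLin = LinearMap.range A.mulVecLin := by
    have hle : LinearMap.range (A * X).mulVecLin ≤ LinearMap.range A.mulVecLin := by
      rw [Matrix.mulVecLin_mul]
      exact LinearMap.range_comp_le_range _ _
    refine Submodule.eq_of_le_of_finrank_le hle ?_
    show A.rank ≤ (A * X).rank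
    omega
  -- A = A * X * C
  have hcol : ∀ j : Fin n, ∃ c : Fin r → ℝ, (A * X) *ᵥ c = A *ᵥ Pi.single j 1 := by
    intro j
    have : A *ᵥ Pi.single j 1 ∈ LinearMap.range (A * X).mulVecLin := by
      rw [hrange]; exact ⟨Pi.single j 1, rfl⟩
    exact this
  let C : Matrix (Fin r) (Fin n) ℝ := Matrix.of fun i j => (hcol j).choose i
  have hC : A * X * C = A := by
    ext i j
    have h4 := congrFun ((hcol j).choose_spec) i
    simpa [Matrix.mul_apply, Matrix.mulVec, dotProduct, Pi.single_apply, mul_ite,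
      Finset.sum_ite_eq', C] using h4
  calc A * X * G * (Yᵀ * A)
      = A * X * G * (Yᵀ * (A * X * C)) := by rw [hC]
    _ = A * X * ((G * B) * C) := by
        simp only [hB, Matrix.mul_assoc]
    _ = A * X * C := by rw [hGB, Matrix.one_mul]
    _ = A := hC
end

section
/- Let A be an m×n matrix, X an n×r matrix, Y an m×s matrix, and suppose Y^T A X has full column rank r. Write Q = orth(AX), the Q-factor of an economy QR factorization of AX (assuming AX has full column rank). Then A X (Y^T A X)^† Y^T = Q (Y^T Q)^† Y^T. -/
open Matrix

theorem mp_unique {p q : ℕ} (M : Matrix (Fin p) (Fin q) ℝ) (G H : Matrix (Fin q) (Fin p) ℝ)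
    (hG : M * G * M = M ∧ G * M * G = G ∧ (M * G)ᵀ = M * G ∧ (G * M)ᵀ = G * M)
    (hH : M * H * M = M ∧ H * M * H = H ∧ (M * H)ᵀ = M * H ∧ (H * M)ᵀ = H * M) :
    G = H := by
  obtain ⟨g1, g2, g3, g4⟩ := hG
  obtain ⟨h1, h2, h3, h4⟩ := hH
  have e1 : M * G = M * H := by
    calc M * G = (M * G)ᵀ := g3.symm
    _ = ((M * H * M) * G)ᵀ := by rw [h1]
    _ = (M * G)ᵀ * (M * H)ᵀ := by
        simp [Matrix.transpose_mul, Matrix.mul_assoc]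
    _ = (M * G) * (M * H) := by rw [g3, h3]
    _ = (M * G * M) * H := by simp [Matrix.mul_assoc]
    _ = M * H := by rw [g1]
  have e2 : G * M = H * M := by
    calc G * M = (G * M)ᵀ := g4.symm
    _ = (G * (M * H * M))ᵀ := by rw [h1]
    _ = (H * M)ᵀ * (G * M)ᵀ := by
        simp [Matrix.transpose_mul, Matrix.mul_assoc]
    _ = (H * M) * (G * M) := by rw [g4, h4]
    _ = H * (M * G * M) := by simp [Matrix.mul_assoc]
    _ = H * M := by rw [g1]
  calc G = G * M * G := g2.symm
  _ = H * M * G := by rw [e2]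
  _ = H * (M * G) := by rw [Matrix.mul_assoc]
  _ = H * (M * H) := by rw [e1]
  _ = H := by rw [← Matrix.mul_assoc, h2]

theorem idem_rank_eq_one {p : ℕ} (P : Matrix (Fin p) (Fin p) ℝ)
    (hidem : P * P = P) (hrank : P.rank = p) : P = 1 := by
  have hsurj : Function.Surjective P.mulVecLin := by
    rw [← LinearMap.range_eq_top]
    apply Submodule.eq_top_of_finrank_eq
    rw [Matrix.rank] at hrank
    simp [hrank]
  have key : ∀ v, P.mulVec v = v := by
    intro v
    obtain ⟨u, hu⟩ := hsurj v
    simp only [mulVecLin_apply] at hu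
    rw [← hu, Matrix.mulVec_mulVec, hidem]
  ext i j
  have := congrFun (key (Pi.single j 1)) i
  simpa [Matrix.mulVec_single, Matrix.one_apply, Pi.single_apply, eq_comm] using this


theorem stmt4 (m n r s : ℕ)
    (A : Matrix (Fin m) (Fin n) ℝ) (X : Matrix (Fin n) (Fin r) ℝ)
    (Y : Matrix (Fin m) (Fin s) ℝ)
    (Q : Matrix (Fin m) (Fin r) ℝ) (R : Matrix (Fin r) (Fin r) ℝ)
    (G1 G2 : Matrix (Fin r) (Fin s) ℝ)
    (hAX : (A * X).rank = r)
    (hQR : A * X = Q * R) (hQ : Qᵀ * Q = 1) (hR : IsUnit R)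
    (hG1 : IsMP (Yᵀ * (A * X)) G1) (hrk : (Yᵀ * (A * X)).rank = r)
    (hG2 : IsMP (Yᵀ * Q) G2) :
    A * X * G1 * Yᵀ = Q * G2 * Yᵀ := by
  set M := Yᵀ * (A * X) with hM
  set B := Yᵀ * Q with hB
  obtain ⟨a1, a2, a3, a4⟩ := hG1
  have hMBR : M = B * R := by rw [hM, hB, hQR, Matrix.mul_assoc]
  -- R inverse
  obtain ⟨u, hu⟩ := hR
  set Ri : Matrix (Fin r) (Fin r) ℝ := ↑u⁻¹ with hRi
  have hRRi : R * Ri = 1 := by rw [← hu, hRi]; exact_mod_cast u.mul_inv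
  have hRiR : Ri * R = 1 := by rw [← hu, hRi]; exact_mod_cast u.inv_mul
  -- Step 1 : G1 * M = 1
  have hP : G1 * M = 1 := by
    apply idem_rank_eq_one
    · calc G1 * M * (G1 * M) = G1 * (M * G1 * M) := by simp [Matrix.mul_assoc]
      _ = G1 * M := by rw [a1]
    · refine le_antisymm ((G1 * M).rank_le_width) ?_
      calc r = M.rank := hrk.symm
      _ = (M * (G1 * M)).rank := by rw [← Matrix.mul_assoc, a1]
      _ ≤ (G1 * M).rank := Matrix.rank_mul_le_right _ _
  -- useful : M * G1 * B = B
  have hMGB : M * G1 * B = B := by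
    have h1 : M * G1 * B * R = B * R := by
      calc M * G1 * B * R = M * G1 * (B * R) := by rw [Matrix.mul_assoc]
      _ = M * G1 * M := by rw [← hMBR]
      _ = M := a1
      _ = B * R := hMBR
    calc M * G1 * B = M * G1 * B * (R * Ri) := by rw [hRRi, Matrix.mul_one]
    _ = (M * G1 * B * R) * Ri := by simp [Matrix.mul_assoc]
    _ = (B * R) * Ri := by rw [h1]
    _ = B * (R * Ri) := by rw [Matrix.mul_assoc]
    _ = B := by rw [hRRi, Matrix.mul_one]
  -- Step 2 : R * G1 is MP of B
  have hBRG : B * (R * G1) = M * G1 := by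
    rw [← Matrix.mul_assoc, ← hMBR]
  have hRGB : R * G1 * B = 1 := by
    have h1 : R * G1 * B * R = R := by
      calc R * G1 * B * R = R * (G1 * (B * R)) := by simp [Matrix.mul_assoc]
      _ = R * (G1 * M) := by rw [← hMBR]
      _ = R := by rw [hP, Matrix.mul_one]
    calc R * G1 * B = R * G1 * B * (R * Ri) := by rw [hRRi, Matrix.mul_one]
    _ = (R * G1 * B * R) * Ri := by simp [Matrix.mul_assoc]
    _ = R * Ri := by rw [h1]
    _ = 1 := hRRi
  have hMP : IsMP B (R * G1) := by
    refine ⟨?_, ?_, ?_, ?_⟩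
    · rw [hBRG, hMGB]
    · calc R * G1 * B * (R * G1) = (R * G1 * B) * R * G1 := by simp [Matrix.mul_assoc]
      _ = R * G1 := by rw [hRGB, Matrix.one_mul]
    · rw [hBRG]; exact a3
    · rw [hRGB]; simp
  have hG2eq : R * G1 = G2 := mp_unique B (R * G1) G2 hMP hG2
  calc A * X * G1 * Yᵀ = Q * (R * G1) * Yᵀ := by rw [hQR]; simp [Matrix.mul_assoc]
  _ = Q * G2 * Yᵀ := by rw [hG2eq]
end

section
/- Let A be an m×n matrix, P an m×m projection (P² = P), and suppose P = Q (Y^T Q)^† Y^T where Q has orthonormal columns, Y^T Q has full column rank, and Q⊥ spans the orthogonal complement of range(Q). Then ‖A − P A‖_F ≤ ‖I + Q (Y^T Q)^† Y^T‖₂ · ‖Q⊥^T A‖_F. -/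
open Matrix

lemma frob_eq_trace {m n : Type*} [Fintype m] [Fintype n] (M : Matrix m n ℝ) :
    frobM M = Real.sqrt ((Mᵀ * M).trace) := by
  unfold frobM
  congr 1
  rw [Finset.sum_comm]
  simp [Matrix.trace, Matrix.mul_apply, sq]

lemma pythag {m n : Type*} [Fintype m] [Fintype n] (B C : Matrix m n ℝ)
    (h : Bᵀ * C = 0) : frobM (B + C) = frobM (B - C) := by
  have h2 : Cᵀ * B = 0 := by
    have := congrArg Matrix.transpose h
    simpa [Matrix.transpose_mul] using this
  have e1 : (B + C)ᵀ * (B + C) = Bᵀ * B + Cᵀ * C := by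
    rw [Matrix.transpose_add, Matrix.add_mul, Matrix.mul_add, Matrix.mul_add, h, h2, add_zero, zero_add]
  have e2 : (B - C)ᵀ * (B - C) = Bᵀ * B + Cᵀ * C := by
    rw [Matrix.transpose_sub, Matrix.sub_mul, Matrix.mul_sub, Matrix.mul_sub, h, h2, sub_zero, zero_sub, sub_neg_eq_add]
  rw [frob_eq_trace, frob_eq_trace, e1, e2]

lemma frob_orth_mul {m r n : Type*} [Fintype m] [Fintype r] [Fintype n] [DecidableEq r]
    (Qp : Matrix m r ℝ) (hQp : Qpᵀ * Qp = 1) (X : Matrix r n ℝ) :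
    frobM (Qp * X) = frobM X := by
  rw [frob_eq_trace, frob_eq_trace]
  congr 2
  rw [Matrix.transpose_mul, Matrix.mul_assoc, ← Matrix.mul_assoc Qpᵀ, hQp, Matrix.one_mul]

lemma frob_mul_le {m n : ℕ} (M : Matrix (Fin m) (Fin m) ℝ) (X : Matrix (Fin m) (Fin n) ℝ) :
    frobM (M * X) ≤ spec M * frobM X := by
  have hM : 0 ≤ spec M := norm_nonneg _
  unfold frobM
  rw [← Real.sqrt_sq hM, ← Real.sqrt_mul (sq_nonneg _)]
  apply Real.sqrt_le_sqrt
  rw [Finset.sum_comm]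
  conv_rhs => rw [Finset.sum_comm]
  rw [Finset.mul_sum]
  apply Finset.sum_le_sum
  intro j _
  set v : EuclideanSpace ℝ (Fin m) := (WithLp.equiv 2 (Fin m → ℝ)).symm (fun i => X i j) with hv
  have hnv : ‖v‖^2 = ∑ i, (X i j)^2 := by
    rw [EuclideanSpace.norm_eq, Real.sq_sqrt (by positivity)]
    simp [hv, sq, WithLp.equiv_symm_apply, PiLp.toLp_apply]
  have hMv : ‖(Matrix.toEuclideanLin M) v‖^2 = ∑ i, ((M * X) i j)^2 := by
    rw [Matrix.toEuclideanLin_apply, EuclideanSpace.norm_eq, Real.sq_sqrt (by positivity)]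
    congr 1
    ext i
    simp [WithLp.equiv_symm_apply, PiLp.toLp_apply, Matrix.mulVec, Matrix.mul_apply, hv, dotProduct, sq]
  have hle : ‖(Matrix.toEuclideanLin M) v‖ ≤ spec M * ‖v‖ := by
    have := (LinearMap.toContinuousLinearMap (Matrix.toEuclideanLin M)).le_opNorm v
    simpa only [spec, LinearMap.coe_toContinuousLinearMap'] using this
  calc ∑ i, ((M * X) i j)^2 = ‖(Matrix.toEuclideanLin M) v‖^2 := hMv.symm
    _ ≤ (spec M * ‖v‖)^2 := pow_le_pow_left₀ (norm_nonneg _) hle 2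
    _ = spec M ^2 * ∑ i, (X i j)^2 := by rw [mul_pow, hnv]

theorem stmt5 (m n r s : ℕ)
    (A : Matrix (Fin m) (Fin n) ℝ)
    (Q : Matrix (Fin m) (Fin r) ℝ) (Qp : Matrix (Fin m) (Fin (m - r)) ℝ)
    (Y : Matrix (Fin m) (Fin s) ℝ) (G : Matrix (Fin r) (Fin s) ℝ)
    (hQ : Qᵀ * Q = 1) (hQp : Qpᵀ * Qp = 1) (hcompl : Q * Qᵀ + Qp * Qpᵀ = 1)
    (hG : IsMP (Yᵀ * Q) G) (hrank : (Yᵀ * Q).rank = r)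
    (P : Matrix (Fin m) (Fin m) ℝ) (hP : P = Q * G * Yᵀ) (hproj : P * P = P) :
    frobM (A - P * A) ≤ spec (1 + Q * G * Yᵀ) * frobM (Qpᵀ * A) := by
  -- Q and Qp are orthogonal to each other
  have hQtQp : Qᵀ * Qp = 0 := by
    have e : Qᵀ * (Q * Qᵀ + Qp * Qpᵀ) * Qp = Qᵀ * Qp := by rw [hcompl, Matrix.mul_one]
    rw [Matrix.mul_add, Matrix.add_mul] at e
    have e1 : Qᵀ * (Q * Qᵀ) * Qp = Qᵀ * Qp := by
      rw [← Matrix.mul_assoc, hQ, Matrix.one_mul]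
    have e2 : Qᵀ * (Qp * Qpᵀ) * Qp = Qᵀ * Qp := by
      rw [← Matrix.mul_assoc, Matrix.mul_assoc (Qᵀ * Qp), hQp, Matrix.mul_one]
    rw [e1, e2] at e
    rwa [add_eq_right] at e
  have hQptQ : Qpᵀ * Q = 0 := by
    have := congrArg Matrix.transpose hQtQp
    simpa [Matrix.transpose_mul] using this
  -- full column rank gives G * (Yᵀ * Q) = 1
  have hinj : Function.Injective (Yᵀ * Q).mulVecLin := by
    rw [← LinearMap.ker_eq_bot]
    have h1 := LinearMap.finrank_range_add_finrank_ker (Yᵀ * Q).mulVecLin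
    have h2 : Module.finrank ℝ (Fin r → ℝ) = r := by simp
    have h3 : Module.finrank ℝ (LinearMap.range (Yᵀ * Q).mulVecLin) = r := hrank
    rw [← Submodule.finrank_eq_zero (R := ℝ)]
    omega
  have hGB : G * (Yᵀ * Q) = 1 := by
    have h0 : (Yᵀ * Q) * (G * (Yᵀ * Q)) = (Yᵀ * Q) * (1 : Matrix (Fin r) (Fin r) ℝ) := by
      rw [Matrix.mul_one, ← Matrix.mul_assoc]; exact hG.1
    have hcols : ∀ j, (Yᵀ * Q).mulVecLin (fun k => (G * (Yᵀ * Q)) k j) =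
        (Yᵀ * Q).mulVecLin (fun k => (1 : Matrix (Fin r) (Fin r) ℝ) k j) := by
      intro j
      ext i
      simp only [Matrix.mulVecLin_apply, Matrix.mulVec, dotProduct]
      have := congrFun (congrFun h0 i) j
      simpa [Matrix.mul_apply] using this
    ext k j
    exact congrFun (hinj (hcols j)) k
  have hGYQ : G * Yᵀ * Q = 1 := by rw [Matrix.mul_assoc]; exact hGB
  have hPQ : P * (Q * Qᵀ) = Q * Qᵀ := by
    rw [hP, ← Matrix.mul_assoc, Matrix.mul_assoc (Q * G) Yᵀ Q, Matrix.mul_assoc Q G (Yᵀ * Q),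
      hGB, Matrix.mul_one]
  have hQpP : Qpᵀ * P = 0 := by
    rw [hP, ← Matrix.mul_assoc, ← Matrix.mul_assoc, hQptQ, Matrix.zero_mul, Matrix.zero_mul]
  -- identity A - P*A = (Qp Qpᵀ A) - P (Qp Qpᵀ A)
  have h1 : Qp * Qpᵀ = 1 - Q * Qᵀ := eq_sub_of_add_eq' hcompl
  have hc : Qp * (Qpᵀ * A) = A - Q * Qᵀ * A := by
    rw [← Matrix.mul_assoc, h1, Matrix.sub_mul, Matrix.one_mul]
  have h3 : P * (Qp * (Qpᵀ * A)) = P * A - Q * Qᵀ * A := by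
    rw [hc, Matrix.mul_sub, ← Matrix.mul_assoc P (Q * Qᵀ) A, hPQ]
  have hid : A - P * A = Qp * (Qpᵀ * A) - P * (Qp * (Qpᵀ * A)) := by
    rw [h3, hc]; abel
  have horth : (Qp * (Qpᵀ * A))ᵀ * (P * (Qp * (Qpᵀ * A))) = 0 := by
    rw [Matrix.transpose_mul, Matrix.mul_assoc, ← Matrix.mul_assoc Qpᵀ P, hQpP,
      Matrix.zero_mul, Matrix.mul_zero]
  calc frobM (A - P * A)
      = frobM (Qp * (Qpᵀ * A) - P * (Qp * (Qpᵀ * A))) := by rw [hid]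
    _ = frobM (Qp * (Qpᵀ * A) + P * (Qp * (Qpᵀ * A))) := (pythag _ _ horth).symm
    _ = frobM ((1 + P) * (Qp * (Qpᵀ * A))) := by rw [Matrix.add_mul, Matrix.one_mul]
    _ ≤ spec (1 + P) * frobM (Qp * (Qpᵀ * A)) := frob_mul_le _ _
    _ = spec (1 + Q * G * Yᵀ) * frobM (Qpᵀ * A) := by rw [hP, frob_orth_mul Qp hQp]
end

section
/- Let A ∈ ℝ^{n₁×⋯×n_d}, and for each k let P_k = A_{(k)}(I ⊗ Y_{⊗<k}) X_k (Y_k^T A_{(k)}(I ⊗ Y_{⊗<k}) X_k)^† Y_k^T, where Y_{⊗<k} = Y_{k−1} ⊗ ⋯ ⊗ Y₁, and assume each Y_k^T A_{(k)}(I ⊗ Y_{⊗<k}) X_k has full column rank. Let Q_k = orth(A_{(k)}(I ⊗ Y_{⊗<k}) X_k) and Q_{⊥k} its orthogonal complement. Then ‖A − A ×₁ P₁ ⋯ ×_d P_d‖_F ≤ Σ_{k=1}^d ‖Q_{⊥k}^T A_{(k)}(I ⊗ Y_{⊗<k})‖_F · ‖I + Q_k (Y_k^T Q_k)^† Y_k^T‖₂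 · ∏_{i=1}^{k−1} ‖(Y_i^T Q_i)^†‖₂. -/
open Matrix

/-- Mixed dimensions: modes `i < k` already sketched to size `r i + ℓ i`, modes `i ≥ k` of size `n i`. -/
def gdim {d : ℕ} (n r ℓ : Fin d → ℕ) (k : Fin d) : Fin d → ℕ :=
  fun i => if (i : ℕ) < (k : ℕ) then r i + ℓ i else n i

/-- The family of matrices realizing `I ⊗ Y_{⊗<k}`: `Y iᵀ` on modes `i < k`, identity elsewhere. -/
def sketchFam {d : ℕ} (n r ℓ : Fin d → ℕ) (Y : ∀ i, Matrix (Fin (n i)) (Fin (r i + ℓ i)) ℝ)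
    (k : Fin d) : ∀ i, Matrix (Fin (gdim n r ℓ k i)) (Fin (n i)) ℝ :=
  fun i => Matrix.of fun a b =>
    if h : (i : ℕ) < (k : ℕ) then Y i b (Fin.cast (if_pos h) a)
    else if (a : ℕ) = (b : ℕ) then 1 else 0

/-- The matrix `A_{(k)} (I ⊗ Y_{⊗<k})`, realized as the mode-`k` matricization of the
partially sketched tensor. -/
def AIY {d : ℕ} (n r ℓ : Fin d → ℕ) (A : Tensor n)
    (Y : ∀ i, Matrix (Fin (n i)) (Fin (r i + ℓ i)) ℝ) (k : Fin d) :
    Matrix (Fin (n k)) ((i : {i : Fin d // i ≠ k}) → Fin (gdim n r ℓ k i)) ℝ :=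
  (matricize k (multiProd A (sketchFam n r ℓ Y k))).submatrix
    (Fin.cast (if_neg (lt_irrefl (k : ℕ))).symm) id

set_option maxHeartbeats 1000000
section Helpers
variable {m n p : Type*} [Fintype m] [Fintype n] [Fintype p]

lemma spec_nonneg [DecidableEq n] (A : Matrix m n ℝ) : 0 ≤ spec A := norm_nonneg _

lemma norm_euclid (v : n → ℝ) :
    ‖(WithLp.equiv 2 (n → ℝ)).symm v‖ = Real.sqrt (∑ j, (v j)^2) := by
  rw [EuclideanSpace.norm_eq]
  congr 1
  refine Finset.sum_congr rfl fun j _ => ?_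
  show ‖v j‖ ^ 2 = v j ^ 2
  rw [Real.norm_eq_abs, sq_abs]

lemma spec_apply_eq [DecidableEq n] (A : Matrix m n ℝ) (v : n → ℝ) :
    ‖(LinearMap.toContinuousLinearMap (Matrix.toEuclideanLin A))
      ((WithLp.equiv 2 (n → ℝ)).symm v)‖ = Real.sqrt (∑ i, (A.mulVec v i)^2) := by
  rw [LinearMap.coe_toContinuousLinearMap', Matrix.toEuclideanLin_apply]
  exact norm_euclid (A.mulVec v)

lemma sq_sum_mulVec_le [DecidableEq n] (A : Matrix m n ℝ) (v : n → ℝ) :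
    ∑ i, (A.mulVec v i)^2 ≤ (spec A)^2 * ∑ j, (v j)^2 := by
  have h := (LinearMap.toContinuousLinearMap (Matrix.toEuclideanLin A)).le_opNorm
    ((WithLp.equiv 2 (n → ℝ)).symm v)
  rw [spec_apply_eq, norm_euclid] at h
  have h2 : (Real.sqrt (∑ i, (A.mulVec v i)^2))^2 ≤
      (spec A * Real.sqrt (∑ j, (v j)^2))^2 := by
    apply pow_le_pow_left₀ (Real.sqrt_nonneg _) h
  rwa [Real.sq_sqrt (by positivity), mul_pow,
    Real.sq_sqrt (by positivity)] at h2

lemma spec_le_of_sq [DecidableEq n] (A : Matrix m n ℝ) (c : ℝ) (hc : 0 ≤ c)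
    (h : ∀ v : n → ℝ, ∑ i, (A.mulVec v i)^2 ≤ c^2 * ∑ j, (v j)^2) : spec A ≤ c := by
  apply ContinuousLinearMap.opNorm_le_bound _ hc
  intro x
  have hx : x = (WithLp.equiv 2 (n → ℝ)).symm ((WithLp.equiv 2 (n → ℝ)) x) := rfl
  rw [hx, spec_apply_eq, norm_euclid]
  set v := (WithLp.equiv 2 (n → ℝ)) x
  calc Real.sqrt (∑ i, (A.mulVec v i)^2) ≤ Real.sqrt (c^2 * ∑ j, (v j)^2) :=
        Real.sqrt_le_sqrt (h v)
    _ = c * Real.sqrt (∑ j, (v j)^2) := by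
        rw [Real.sqrt_mul (sq_nonneg c), Real.sqrt_sq hc]

lemma spec_mul_le [DecidableEq n] [DecidableEq p] (A : Matrix m n ℝ) (B : Matrix n p ℝ) :
    spec (A * B) ≤ spec A * spec B := by
  apply spec_le_of_sq _ _ (mul_nonneg (spec_nonneg A) (spec_nonneg B))
  intro v
  rw [← Matrix.mulVec_mulVec]
  calc ∑ i, (A.mulVec (B.mulVec v) i)^2 ≤ (spec A)^2 * ∑ j, (B.mulVec v j)^2 :=
        sq_sum_mulVec_le A _
    _ ≤ (spec A)^2 * ((spec B)^2 * ∑ j, (v j)^2) := by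
        apply mul_le_mul_of_nonneg_left (sq_sum_mulVec_le B v) (sq_nonneg _)
    _ = (spec A * spec B)^2 * ∑ j, (v j)^2 := by ring

lemma sq_sum_orth [DecidableEq n] (Q : Matrix m n ℝ) (h : Qᵀ * Q = 1) (v : n → ℝ) :
    ∑ i, (Q.mulVec v i)^2 = ∑ j, (v j)^2 := by
  have : ∑ i, (Q.mulVec v i)^2 = (Q.mulVec v) ⬝ᵥ (Q.mulVec v) := by
    simp [dotProduct, sq]
  rw [this, Matrix.dotProduct_mulVec, ← Matrix.mulVec_transpose,
    Matrix.mulVec_mulVec, h, Matrix.one_mulVec]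
  simp [dotProduct, sq]

lemma spec_orth_le [DecidableEq n] (Q : Matrix m n ℝ) (h : Qᵀ * Q = 1) : spec Q ≤ 1 := by
  apply spec_le_of_sq _ _ zero_le_one
  intro v
  rw [sq_sum_orth Q h v, one_pow, one_mul]

end Helpers

section CastId

def castId {a b : ℕ} : Matrix (Fin a) (Fin b) ℝ :=
  Matrix.of fun i j => if (i : ℕ) = (j : ℕ) then 1 else 0

lemma castId_refl {a : ℕ} : (castId : Matrix (Fin a) (Fin a) ℝ) = 1 := by
  ext i j
  simp [castId, Matrix.one_apply, Fin.val_eq_val]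

lemma castId_mul {a b : ℕ} (h : a = b) {X : Type*} [Fintype X] (M : Matrix (Fin b) X ℝ) :
    (castId : Matrix (Fin a) (Fin b) ℝ) * M = M.submatrix (Fin.cast h) id := by
  ext i j
  rw [Matrix.mul_apply, Finset.sum_eq_single (Fin.cast h i)]
  · simp [castId]
  · intro c _ hc
    rw [show (castId : Matrix (Fin a) (Fin b) ℝ) i c = 0 from if_neg
      (fun hv => hc (Fin.ext (by simpa using hv.symm))), zero_mul]
  · intro hc
    exact absurd (Finset.mem_univ _) hc

lemma mul_castId {a b : ℕ} (h : a = b) {X : Type*} [Fintype X] (M : Matrix X (Fin a) ℝ) :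
    M * (castId : Matrix (Fin a) (Fin b) ℝ) = M.submatrix id (Fin.cast h.symm) := by
  ext i j
  rw [Matrix.mul_apply, Finset.sum_eq_single (Fin.cast h.symm j)]
  · simp [castId]
  · intro c _ hc
    rw [show (castId : Matrix (Fin a) (Fin b) ℝ) c j = 0 from if_neg
      (fun hv => hc (Fin.ext (by simpa using hv))), mul_zero]
  · intro hc
    exact absurd (Finset.mem_univ _) hc

lemma castId_mul_castId {a b c : ℕ} (h : a = b) :
    (castId : Matrix (Fin a) (Fin b) ℝ) * (castId : Matrix (Fin b) (Fin c) ℝ) =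
      (castId : Matrix (Fin a) (Fin c) ℝ) := by
  rw [castId_mul h]
  ext i j
  simp [castId, Matrix.submatrix_apply]

lemma castId_mul_castId_cancel {a b : ℕ} (h : a = b) :
    (castId : Matrix (Fin a) (Fin b) ℝ) * (castId : Matrix (Fin b) (Fin a) ℝ) = 1 := by
  rw [castId_mul_castId h, castId_refl]

lemma castId_mul_castId_mul {a b c : ℕ} (h : a = b) {X : Type*} [Fintype X]
    (Z : Matrix (Fin c) X ℝ) :
    (castId : Matrix (Fin a) (Fin b) ℝ) * ((castId : Matrix (Fin b) (Fin c) ℝ) * Z) =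
      (castId : Matrix (Fin a) (Fin c) ℝ) * Z := by
  rw [← Matrix.mul_assoc, castId_mul_castId h]

end CastId

section MP

variable {l m n p : Type*} [Fintype l] [Fintype m] [Fintype n] [Fintype p]

lemma mp_unique_s13 (A : Matrix m n ℝ) (B C : Matrix n m ℝ) (hB : IsMP A B) (hC : IsMP A C) :
    B = C := by
  obtain ⟨hB1, hB2, hB3, hB4⟩ := hB
  obtain ⟨hC1, hC2, hC3, hC4⟩ := hC
  have e1 : A * B = A * C := by
    calc A * B = (A * B)ᵀ := hB3.symm
      _ = (A * C * A * B)ᵀ := by rw [hC1]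
      _ = (A * B)ᵀ * (A * C)ᵀ := by
          rw [show A * C * A * B = (A * C) * (A * B) from by rw [Matrix.mul_assoc (A*C)],
            Matrix.transpose_mul]
      _ = A * B * (A * C) := by rw [hB3, hC3]
      _ = A * C := by
          rw [Matrix.mul_assoc, ← Matrix.mul_assoc B A C, ← Matrix.mul_assoc A (B*A) C,
            ← Matrix.mul_assoc A B A, hB1]
  have e2 : B * A = C * A := by
    calc B * A = (B * A)ᵀ := hB4.symm
      _ = (B * (A * C * A))ᵀ := by rw [hC1]
      _ = (C * A)ᵀ * (B * A)ᵀ := by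
          rw [show B * (A * C * A) = (B * A) * (C * A) from by
            simp only [Matrix.mul_assoc], Matrix.transpose_mul]
      _ = C * A * (B * A) := by rw [hB4, hC4]
      _ = C * A := by
          rw [← Matrix.mul_assoc (C*A) B A, Matrix.mul_assoc C A B, e1,
            ← Matrix.mul_assoc C A C, hC2]
  calc B = B * A * B := hB2.symm
    _ = B * (A * C) := by rw [Matrix.mul_assoc, e1]
    _ = (B * A) * C := by rw [Matrix.mul_assoc]
    _ = C * A * C := by rw [e2]
    _ = C := hC2

end MP

section FullRank

-- square matrix, idempotent, full rank → identity
lemma idem_full_rank_eq_one {r : ℕ} (E : Matrix (Fin r) (Fin r) ℝ)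
    (hidem : E * E = E) (hrk : E.rank = r) : E = 1 := by
  have hsurj : Function.Surjective E.mulVecLin := by
    rw [← LinearMap.range_eq_top]
    apply Submodule.eq_top_of_finrank_eq
    rw [show Module.finrank ℝ (LinearMap.range E.mulVecLin) = E.rank from rfl, hrk,
      Module.finrank_fin_fun]
  have hid : ∀ x : Fin r → ℝ, E.mulVecLin x = x := by
    have hinj : Function.Injective E.mulVecLin :=
      (LinearMap.injective_iff_surjective).2 hsurj
    intro x
    obtain ⟨y, hy⟩ := hsurj x
    have : E.mulVecLin (E.mulVecLin y) = E.mulVecLin y := by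
      rw [← LinearMap.comp_apply, ← Matrix.mulVecLin_mul, hidem]
    rw [← hy]
    exact this
  ext i j
  have := congrFun (hid (Pi.single j 1)) i
  rw [show E.mulVecLin (Pi.single j 1) = E.mulVec (Pi.single j 1) from rfl,
    Matrix.mulVec_single] at this
  simp only [MulOpposite.op_one, one_smul, Matrix.col_apply] at this
  rw [this, Matrix.one_apply, Pi.single_apply]

-- pseudoinverse of a full-column-rank matrix is a left inverse
lemma mp_left_inv {m : Type*} [Fintype m] {r : ℕ} (N : Matrix m (Fin r) ℝ)
    (H : Matrix (Fin r) m ℝ) (hH : IsMP N H) (hrk : N.rank = r) : H * N = 1 := by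
  obtain ⟨h1, h2, h3, h4⟩ := hH
  apply idem_full_rank_eq_one
  · calc H * N * (H * N) = (H * N * H) * N := by simp only [Matrix.mul_assoc]
      _ = H * N := by rw [h2]
  · refine le_antisymm (le_trans (Matrix.rank_mul_le_right H N) ?_) ?_
    · rw [hrk]
    · calc r = N.rank := hrk.symm
        _ = (N * (H * N)).rank := by rw [← Matrix.mul_assoc, h1]
        _ ≤ (H * N).rank := Matrix.rank_mul_le_right N (H * N)

end FullRank

section PQ

lemma P_eq {nk rk rl : ℕ} (MX : Matrix (Fin nk) (Fin rk) ℝ) (Y : Matrix (Fin nk) (Fin rl) ℝ)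
    (Q : Matrix (Fin nk) (Fin rk) ℝ) (R : Matrix (Fin rk) (Fin rk) ℝ)
    (G H : Matrix (Fin rk) (Fin rl) ℝ)
    (hQR : MX = Q * R) (hR : IsUnit R) (hG : IsMP (Yᵀ * MX) G) (hH : IsMP (Yᵀ * Q) H)
    (hrank : (Yᵀ * MX).rank = rk) :
    MX * G * Yᵀ = Q * H * Yᵀ ∧ H * (Yᵀ * Q) = 1 := by
  have hdet : IsUnit R.det := (Matrix.isUnit_iff_isUnit_det R).1 hR
  have hNR : Yᵀ * MX = (Yᵀ * Q) * R := by rw [hQR, ← Matrix.mul_assoc]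
  have hrkN : (Yᵀ * Q).rank = rk := by
    rw [hNR, Matrix.rank_mul_eq_left_of_isUnit_det R (Yᵀ * Q) hdet] at hrank
    exact hrank
  have hHN : H * (Yᵀ * Q) = 1 := mp_left_inv _ _ hH hrkN
  have hRR : R * R⁻¹ = 1 := Matrix.mul_nonsing_inv R hdet
  have hRR' : R⁻¹ * R = 1 := Matrix.nonsing_inv_mul R hdet
  set N := Yᵀ * Q with hN
  obtain ⟨h1, h2, h3, h4⟩ := hH
  have key1 : (N * R) * (R⁻¹ * H) = N * H := by
    calc (N * R) * (R⁻¹ * H) = N * (R * R⁻¹) * H := by simp only [Matrix.mul_assoc]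
      _ = N * H := by rw [hRR, Matrix.mul_one]
  have key2 : (R⁻¹ * H) * (N * R) = 1 := by
    calc (R⁻¹ * H) * (N * R) = R⁻¹ * (H * N) * R := by simp only [Matrix.mul_assoc]
      _ = 1 := by rw [hHN, Matrix.mul_one, hRR']
  have hC : IsMP (N * R) (R⁻¹ * H) := by
    refine ⟨?_, ?_, ?_, ?_⟩
    · rw [key1]
      calc N * H * (N * R) = (N * H * N) * R := by simp only [Matrix.mul_assoc]
        _ = N * R := by rw [h1]
    · rw [key2, Matrix.one_mul]
    · rw [key1, h3]
    · rw [key2, Matrix.transpose_one]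
  have hGC : G = R⁻¹ * H := mp_unique_s13 (N * R) G (R⁻¹ * H) (by rwa [hNR] at hG) hC
  constructor
  · rw [hGC, hQR]
    calc Q * R * (R⁻¹ * H) * Yᵀ = Q * (R * R⁻¹) * H * Yᵀ := by simp only [Matrix.mul_assoc]
      _ = Q * H * Yᵀ := by rw [hRR, Matrix.mul_one]
  · exact hHN

lemma S_identity {nk rk : ℕ} (Q : Matrix (Fin nk) (Fin rk) ℝ)
    (W : Matrix (Fin rk) (Fin nk) ℝ)
    (hQ : Qᵀ * Q = 1) (hWQ : W * Q = 1) :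
    (1 - (Q * Qᵀ + Q * Qᵀ)) * ((1 + Q * W) * (1 - Q * Qᵀ)) = 1 - Q * W := by
  have hQ' : ∀ (Z : Matrix (Fin rk) (Fin nk) ℝ), Qᵀ * (Q * Z) = Z := by
    intro Z; rw [← Matrix.mul_assoc, hQ, Matrix.one_mul]
  have hWQ' : ∀ (Z : Matrix (Fin rk) (Fin nk) ℝ), W * (Q * Z) = Z := by
    intro Z; rw [← Matrix.mul_assoc, hWQ, Matrix.one_mul]
  simp only [Matrix.mul_sub, Matrix.sub_mul, Matrix.mul_add, Matrix.add_mul,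
    Matrix.one_mul, Matrix.mul_one, Matrix.mul_assoc, hQ', hWQ']
  abel

end PQ

section Tensors

lemma multiProd_eq_mulVec {d : ℕ} {n m : Fin d → ℕ} (A : Tensor n)
    (X : ∀ i, Matrix (Fin (m i)) (Fin (n i)) ℝ) :
    multiProd A X = (kronAll X).mulVec A := by
  funext idx
  simp [multiProd, kronAll, Matrix.mulVec, dotProduct]

lemma kronAll_mul {d : ℕ} {n m p : Fin d → ℕ}
    (B : ∀ i, Matrix (Fin (m i)) (Fin (p i)) ℝ)
    (C : ∀ i, Matrix (Fin (p i)) (Fin (n i)) ℝ) :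
    kronAll (fun i => B i * C i) = kronAll B * kronAll C := by
  funext r c
  simp only [kronAll, Matrix.mul_apply, Matrix.of_apply]
  rw [Finset.prod_univ_sum, Fintype.piFinset_univ]
  exact Finset.sum_congr rfl fun x _ => Finset.prod_mul_distrib

lemma multiProd_multiProd {d : ℕ} {n m p : Fin d → ℕ} (A : Tensor n)
    (C : ∀ i, Matrix (Fin (p i)) (Fin (n i)) ℝ)
    (B : ∀ i, Matrix (Fin (m i)) (Fin (p i)) ℝ) :
    multiProd (multiProd A C) B = multiProd A (fun i => B i * C i) := by
  rw [multiProd_eq_mulVec, multiProd_eq_mulVec, multiProd_eq_mulVec,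
    kronAll_mul, ← Matrix.mulVec_mulVec]

lemma kron_sq_le : ∀ {d : ℕ} {n m : Fin d → ℕ}
    (B : ∀ i, Matrix (Fin (m i)) (Fin (n i)) ℝ) (v : ((i : Fin d) → Fin (n i)) → ℝ),
    ∑ r, ((kronAll B).mulVec v r)^2 ≤ (∏ i, spec (B i))^2 * ∑ c, (v c)^2 := by
  intro d
  induction d with
  | zero =>
    intro n m B v
    simp [kronAll, Matrix.mulVec, dotProduct]
  | succ d ih =>
    intro n m B v
    have key : ∀ (r0 : Fin (m 0)) (rtl : (i : Fin d) → Fin (m i.succ)),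
        (kronAll B).mulVec v (Fin.cons r0 rtl) =
          (kronAll (fun i => B i.succ)).mulVec
            (fun ctl => (B 0).mulVec (fun c0 => v (Fin.cons c0 ctl)) r0) rtl := by
      intro r0 rtl
      simp only [Matrix.mulVec, dotProduct, kronAll]
      rw [← Equiv.sum_comp (Fin.consEquiv (fun i => Fin (n i))), Fintype.sum_prod_type]
      rw [Finset.sum_comm]
      refine Finset.sum_congr rfl fun ctl _ => ?_
      rw [Finset.mul_sum]
      refine Finset.sum_congr rfl fun c0 _ => ?_
      simp only [Fin.consEquiv_apply, Fin.prod_univ_succ, Fin.cons_zero, Fin.cons_succ]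
      show _ * v (Fin.cons c0 ctl) = _
      ring
    calc ∑ r, ((kronAll B).mulVec v r)^2
        = ∑ r0, ∑ rtl, ((kronAll B).mulVec v (Fin.cons r0 rtl))^2 := by
          rw [← Equiv.sum_comp (Fin.consEquiv (fun i => Fin (m i))), Fintype.sum_prod_type]
          rfl
      _ ≤ ∑ r0 : Fin (m 0), (∏ i : Fin d, spec (B i.succ))^2 *
            ∑ ctl, ((B 0).mulVec (fun c0 => v (Fin.cons c0 ctl)) r0)^2 := by
          refine Finset.sum_le_sum fun r0 _ => ?_
          calc ∑ rtl, ((kronAll B).mulVec v (Fin.cons r0 rtl))^2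
              = ∑ rtl, ((kronAll (fun i => B i.succ)).mulVec
                  (fun ctl => (B 0).mulVec (fun c0 => v (Fin.cons c0 ctl)) r0) rtl)^2 := by
                refine Finset.sum_congr rfl fun rtl _ => ?_
                rw [key r0 rtl]
            _ ≤ (∏ i : Fin d, spec (B i.succ))^2 *
                  ∑ ctl, ((B 0).mulVec (fun c0 => v (Fin.cons c0 ctl)) r0)^2 :=
                ih _ _
      _ = (∏ i : Fin d, spec (B i.succ))^2 *
            ∑ ctl, ∑ r0, ((B 0).mulVec (fun c0 => v (Fin.cons c0 ctl)) r0)^2 := by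
          rw [← Finset.mul_sum, Finset.sum_comm]
      _ ≤ (∏ i : Fin d, spec (B i.succ))^2 *
            ∑ ctl, (spec (B 0))^2 * ∑ c0, (v (Fin.cons c0 ctl))^2 := by
          refine mul_le_mul_of_nonneg_left ?_ (sq_nonneg _)
          exact Finset.sum_le_sum fun ctl _ => sq_sum_mulVec_le (B 0) _
      _ = (∏ i : Fin (d+1), spec (B i))^2 * ∑ c, (v c)^2 := by
          rw [← Finset.mul_sum, Fin.prod_univ_succ, mul_pow]
          rw [← Equiv.sum_comp (Fin.consEquiv (fun i => Fin (n i))) (fun c => (v c)^2),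
            Fintype.sum_prod_type]
          have : ∀ (c0 : Fin (n 0)) (ctl : (i : Fin d) → Fin (n i.succ)),
              v ((Fin.consEquiv fun i => Fin (n i)) (c0, ctl)) = v (Fin.cons c0 ctl) := fun _ _ => rfl
          simp only [this]
          rw [Finset.sum_comm]
          ring_nf

end Tensors

section Delta
variable {d : ℕ}

lemma prod_split_ne {k : Fin d} (F : Fin d → ℝ) :
    ∏ i, F i = F k * ∏ i : {i : Fin d // i ≠ k}, F i.1 := by
  rw [← Finset.mul_prod_erase Finset.univ F (Finset.mem_univ k)]
  congr 1
  rw [← Finset.prod_subtype (Finset.univ.erase k) (fun x => by simp) (fun i => F i)]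

lemma piSplit_symm_k {g : Fin d → ℕ} (k : Fin d) (j : Fin (g k))
    (rest : (i : {i : Fin d // i ≠ k}) → Fin (g i)) :
    (Equiv.piSplitAt k (fun i => Fin (g i))).symm (j, rest) k = j := by
  simp [Equiv.piSplitAt_symm_apply]

lemma piSplit_symm_ne {g : Fin d → ℕ} (k : Fin d) (j : Fin (g k))
    (rest : (i : {i : Fin d // i ≠ k}) → Fin (g i)) (i : Fin d) (h : i ≠ k) :
    (Equiv.piSplitAt k (fun i => Fin (g i))).symm (j, rest) i = rest ⟨i, h⟩ := by
  simp [Equiv.piSplitAt_symm_apply, h]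

lemma multiProd_delta {g q : Fin d → ℕ} (k : Fin d) (T : Tensor g)
    (D : ∀ i, Matrix (Fin (q i)) (Fin (g i)) ℝ)
    (hq : ∀ i, i ≠ k → q i = g i)
    (hD : ∀ (i) (h : i ≠ k) (a : Fin (q i)) (b : Fin (g i)),
      D i a b = if (a : ℕ) = (b : ℕ) then 1 else 0)
    (idx : ∀ i, Fin (q i)) :
    multiProd T D idx = ∑ j : Fin (g k), D k (idx k) j *
      T (fun i => if h : i = k then Fin.cast (congrArg g h).symm j
                  else Fin.cast (hq i h) (idx i)) := by
  unfold multiProd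
  rw [← Equiv.sum_comp (Equiv.piSplitAt k (fun i => Fin (g i))).symm, Fintype.sum_prod_type]
  refine Finset.sum_congr rfl fun j _ => ?_
  rw [Finset.sum_eq_single (fun i : {i : Fin d // i ≠ k} => Fin.cast (hq i.1 i.2) (idx i.1))]
  · congr 1
    · rw [prod_split_ne (k := k), piSplit_symm_k]
      have : ∀ i : {i : Fin d // i ≠ k},
          D i.1 (idx i.1) ((Equiv.piSplitAt k (fun i => Fin (g i))).symm
            (j, fun i : {i : Fin d // i ≠ k} => Fin.cast (hq i.1 i.2) (idx i.1)) i.1) = 1 := by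
        intro i
        rw [piSplit_symm_ne k j _ i.1 i.2, hD i.1 i.2]
        simp
      rw [Finset.prod_congr rfl (fun i _ => this i)]
      simp
    · congr 1
      funext i
      by_cases h : i = k
      · subst h
        rw [piSplit_symm_k, dif_pos rfl]
        exact (Fin.ext (by simp)).symm
      · rw [piSplit_symm_ne k j _ i h, dif_neg h]
  · intro rest _ hne
    have : ∃ i : {i : Fin d // i ≠ k}, rest i ≠ Fin.cast (hq i.1 i.2) (idx i.1) := by
      by_contra hc
      push_neg at hc
      exact hne (funext hc)
    obtain ⟨i0, hi0⟩ := this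
    have hz : D i0.1 (idx i0.1) ((Equiv.piSplitAt k (fun i => Fin (g i))).symm (j, rest) i0.1)
        = 0 := by
      rw [piSplit_symm_ne k j _ i0.1 i0.2, hD i0.1 i0.2, if_neg]
      intro hval
      exact hi0 (Fin.ext (by simp [← hval]))
    rw [prod_split_ne (k := k)]
    rw [Finset.prod_eq_zero (Finset.mem_univ i0) hz]
    ring
  · intro h
    exact absurd (Finset.mem_univ _) h

end Delta

section FrobT
variable {d : ℕ} {n : Fin d → ℕ}

lemma frobT_eq_norm (A : Tensor n) :
    frobT A = ‖(WithLp.equiv 2 _).symm A‖ := (norm_euclid A).symm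

lemma frobT_nonneg (A : Tensor n) : 0 ≤ frobT A := Real.sqrt_nonneg _

lemma frobT_sum_le {s : Finset ℕ} (f : ℕ → Tensor n) :
    frobT (∑ x ∈ s, f x) ≤ ∑ x ∈ s, frobT (f x) := by
  classical
  induction s using Finset.cons_induction with
  | empty =>
    simp only [Finset.sum_empty]
    rw [frobT_eq_norm]
    have : ((WithLp.equiv 2 _).symm (0 : Tensor n)) = 0 := rfl
    rw [this, norm_zero]
  | cons a s ha ih =>
    rw [Finset.sum_cons, Finset.sum_cons]
    calc frobT (f a + ∑ x ∈ s, f x)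
        ≤ frobT (f a) + frobT (∑ x ∈ s, f x) := by
          rw [frobT_eq_norm, frobT_eq_norm, frobT_eq_norm]
          rw [show (WithLp.equiv 2 _).symm (f a + ∑ x ∈ s, f x) =
            (WithLp.equiv 2 _).symm (f a) + (WithLp.equiv 2 _).symm (∑ x ∈ s, f x) from rfl]
          exact norm_add_le _ _
      _ ≤ frobT (f a) + ∑ x ∈ s, frobT (f x) := by linarith [ih]

lemma frobT_multiProd_le {m : Fin d → ℕ} (A : Tensor n)
    (B : ∀ i, Matrix (Fin (m i)) (Fin (n i)) ℝ) :
    frobT (multiProd A B) ≤ (∏ i, spec (B i)) * frobT A := by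
  rw [multiProd_eq_mulVec]
  unfold frobT
  calc Real.sqrt (∑ r, ((kronAll B).mulVec A r)^2)
      ≤ Real.sqrt ((∏ i, spec (B i))^2 * ∑ c, (A c)^2) := Real.sqrt_le_sqrt (kron_sq_le B A)
    _ = (∏ i, spec (B i)) * Real.sqrt (∑ c, (A c)^2) := by
        rw [Real.sqrt_mul (sq_nonneg _), Real.sqrt_sq
          (Finset.prod_nonneg fun i _ => spec_nonneg _)]

end FrobT

section FamAt
variable {d : ℕ}

def dimAt (g : Fin d → ℕ) (k : Fin d) (q : ℕ) : Fin d → ℕ := fun i => if i = k then q else g i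

lemma dimAt_k {g : Fin d → ℕ} {k : Fin d} {q : ℕ} {i : Fin d} (h : i = k) :
    dimAt g k q i = q := if_pos h

lemma dimAt_ne {g : Fin d → ℕ} {k : Fin d} {q : ℕ} {i : Fin d} (h : i ≠ k) :
    dimAt g k q i = g i := if_neg h

def famAt {g : Fin d → ℕ} (k : Fin d) {q : ℕ} (M : Matrix (Fin q) (Fin (g k)) ℝ) :
    ∀ i, Matrix (Fin (dimAt g k q i)) (Fin (g i)) ℝ :=
  fun i => Matrix.of fun a b =>
    if h : i = k then M (Fin.cast (dimAt_k h) a) (Fin.cast (congrArg g h) b)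
    else if (a : ℕ) = (b : ℕ) then 1 else 0

lemma frobT_famAt {g : Fin d → ℕ} (k : Fin d) {q : ℕ} (M : Matrix (Fin q) (Fin (g k)) ℝ)
    (T : Tensor g) :
    frobT (multiProd T (famAt k M)) = frobM (M * matricize k T) := by
  unfold frobT frobM
  congr 1
  rw [← Equiv.sum_comp ((Equiv.piSplitAt k (fun i => Fin (dimAt g k q i))).trans
    (Equiv.prodCongr (finCongr (dimAt_k rfl)) (Equiv.piCongrRight
      (fun i => finCongr (dimAt_ne i.2))))).symm, Fintype.sum_prod_type]
  refine Finset.sum_congr rfl fun a _ => Finset.sum_congr rfl fun c _ => ?_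
  congr 1
  set idx := ((Equiv.piSplitAt k (fun i => Fin (dimAt g k q i))).trans
    (Equiv.prodCongr (finCongr (dimAt_k rfl)) (Equiv.piCongrRight
      (fun i => finCongr (dimAt_ne i.2))))).symm (a, c) with hidx
  have hik : ∀ {i : Fin d} (h : i = k), (Fin.cast (dimAt_k h) (idx i) : ℕ) = (a : ℕ) := by
    intro i h
    subst h
    simp [hidx, Equiv.piSplitAt_symm_apply]
  have hine : ∀ {i : Fin d} (h : i ≠ k), (idx i : ℕ) = (c ⟨i, h⟩ : ℕ) := by
    intro i h
    simp [hidx, Equiv.piSplitAt_symm_apply, h]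
  rw [multiProd_delta k T (famAt k M) (fun i h => dimAt_ne h)
    (fun i h a b => by simp [famAt, h]) idx]
  rw [Matrix.mul_apply]
  refine Finset.sum_congr rfl fun j _ => congrArg₂ (fun x y => x * y) ?_ ?_
  · show (famAt k M) k (idx k) j = M a j
    show (if h : k = k then M (Fin.cast (dimAt_k h) (idx k)) (Fin.cast (congrArg g h) j)
      else if ((idx k) : ℕ) = (j : ℕ) then 1 else 0) = M a j
    rw [dif_pos rfl]
    congr 1
    all_goals first
      | exact Fin.ext (hik rfl)
      | exact Fin.ext (by simp)
  · unfold matricize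
    congr 1
    funext i
    by_cases h : i = k
    · subst h
      rw [dif_pos rfl, dif_pos rfl]
    · rw [dif_neg h, dif_neg h]
      exact Fin.ext (by simpa using hine h)

end FamAt

section SqFam
variable {d : ℕ} {n : Fin d → ℕ}

def sqFam (k : Fin d) (M : Matrix (Fin (n k)) (Fin (n k)) ℝ) :
    ∀ i, Matrix (Fin (n i)) (Fin (n i)) ℝ :=
  fun i => Matrix.of fun a b =>
    if h : i = k then M (Fin.cast (congrArg n h) a) (Fin.cast (congrArg n h) b)
    else if (a : ℕ) = (b : ℕ) then 1 else 0

lemma modeProdSq_eq (k : Fin d) (T : Tensor n) (M : Matrix (Fin (n k)) (Fin (n k)) ℝ) :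
    modeProdSq k T M = multiProd T (sqFam k M) := by
  funext idx
  rw [multiProd_delta k T (sqFam k M) (fun i h => rfl)
    (fun i h a b => by simp [sqFam, h]) idx]
  unfold modeProdSq
  refine Finset.sum_congr rfl fun j _ => congrArg₂ (fun x y => x * y) ?_ ?_
  · symm
    show (if h : k = k then M (Fin.cast (congrArg n h) (idx k)) (Fin.cast (congrArg n h) j)
      else if ((idx k) : ℕ) = (j : ℕ) then 1 else 0) = M (idx k) j
    rw [dif_pos rfl]
    congr 1
    all_goals first
      | exact Fin.ext (by simp)
      | exact Fin.ext (by simp)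
  · symm
    congr 1
    funext i
    by_cases h : i = k
    · subst h
      rw [dif_pos rfl, Function.update_self]
      exact Fin.ext (by simp)
    · rw [dif_neg h, Function.update_of_ne h]
      exact Fin.ext (by simp)

lemma sqFam_mul (k : Fin d) (M : Matrix (Fin (n k)) (Fin (n k)) ℝ)
    (F : ∀ i, Matrix (Fin (n i)) (Fin (n i)) ℝ) :
    (fun i => sqFam k M i * F i) = Function.update F k (M * F k) := by
  funext i
  by_cases h : i = k
  · subst h
    rw [Function.update_self]
    congr 1
    ext a b
    show (if h : i = i then M (Fin.cast (congrArg n h) a) (Fin.cast (congrArg n h) b)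
      else if (a : ℕ) = (b : ℕ) then 1 else 0) = M a b
    rw [dif_pos rfl]
    congr 1 <;> exact Fin.ext (by simp)
  · rw [Function.update_of_ne h]
    have : sqFam k M i = 1 := by
      ext a b
      show (if hh : i = k then M (Fin.cast (congrArg n hh) a) (Fin.cast (congrArg n hh) b)
        else if (a : ℕ) = (b : ℕ) then 1 else 0) = (1 : Matrix (Fin (n i)) (Fin (n i)) ℝ) a b
      rw [dif_neg h, Matrix.one_apply]
      simp [Fin.val_eq_val]
    rw [this, one_mul]

lemma modeProdSq_multiProd (k : Fin d) (A : Tensor n)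
    (F : ∀ i, Matrix (Fin (n i)) (Fin (n i)) ℝ) (M : Matrix (Fin (n k)) (Fin (n k)) ℝ) :
    modeProdSq k (multiProd A F) M = multiProd A (Function.update F k (M * F k)) := by
  rw [modeProdSq_eq, multiProd_multiProd, sqFam_mul]

lemma kronAll_one : kronAll (fun i => (1 : Matrix (Fin (n i)) (Fin (n i)) ℝ)) = 1 := by
  funext r c
  show (∏ i, (1 : Matrix (Fin (n i)) (Fin (n i)) ℝ) (r i) (c i)) = _
  simp only [Matrix.one_apply]
  rw [Finset.prod_boole]
  by_cases h : r = c
  · subst h; simp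
  · rw [if_neg h, if_neg (by simpa [funext_iff] using h)]

lemma multiProd_one (A : Tensor n) :
    multiProd A (fun i => (1 : Matrix (Fin (n i)) (Fin (n i)) ℝ)) = A := by
  rw [multiProd_eq_mulVec, kronAll_one, Matrix.one_mulVec]

lemma applyUpTo_eq (P : ∀ k : Fin d, Matrix (Fin (n k)) (Fin (n k)) ℝ) (A : Tensor n) :
    ∀ m : ℕ, applyUpTo P A m = multiProd A (fun i => if (i : ℕ) < m then P i else 1) := by
  intro m
  induction m with
  | zero =>
    show A = _
    simp only [Nat.not_lt_zero, if_false]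
    exact (multiProd_one A).symm
  | succ m ih =>
    by_cases hm : m < d
    · have hget : (List.finRange d)[m]? = some ⟨m, hm⟩ := by
        rw [List.getElem?_eq_getElem (by simpa using hm)]
        simp
      have : applyUpTo P A (m+1) = modeProdSq ⟨m, hm⟩ (applyUpTo P A m) (P ⟨m, hm⟩) := by
        unfold applyUpTo
        rw [List.take_succ, hget]
        simp [List.foldl_append]
      rw [this, ih, modeProdSq_multiProd]
      have hfam : Function.update (fun i : Fin d => if (i : ℕ) < m then P i else 1) ⟨m, hm⟩
          (P ⟨m, hm⟩ * if ((⟨m, hm⟩ : Fin d) : ℕ) < m then P ⟨m, hm⟩ else 1) =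
          (fun i : Fin d => if (i : ℕ) < m + 1 then P i else 1) := by
        funext i
        by_cases h : i = (⟨m, hm⟩ : Fin d)
        · subst h
          rw [Function.update_self, if_neg (by simp), if_pos (by simp), mul_one]
        · rw [Function.update_of_ne h]
          have hv : (i : ℕ) ≠ m := fun hc => h (Fin.ext hc)
          by_cases h2 : (i : ℕ) < m
          · rw [if_pos h2, if_pos (Nat.lt_succ_of_lt h2)]
          · rw [if_neg h2, if_neg (by omega)]
      rw [hfam]
    · have hlen : ((List.finRange d).length ≤ m) := by simpa using Nat.le_of_not_lt hm
      have : applyUpTo P A (m+1) = applyUpTo P A m := by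
        unfold applyUpTo
        rw [List.take_of_length_le hlen, List.take_of_length_le (Nat.le_succ_of_le hlen)]
      rw [this, ih]
      have hfam : (fun i : Fin d => if (i : ℕ) < m then P i else 1) =
          (fun i : Fin d => if (i : ℕ) < m + 1 then P i else 1) := by
        funext i
        have : (i : ℕ) < m := lt_of_lt_of_le i.2 (Nat.le_of_not_lt hm)
        rw [if_pos this, if_pos (Nat.lt_succ_of_lt this)]
      rw [hfam]

lemma multiProd_update_sub (A : Tensor n) (F : ∀ i, Matrix (Fin (n i)) (Fin (n i)) ℝ)
    (k : Fin d) (X Y : Matrix (Fin (n k)) (Fin (n k)) ℝ) :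
    multiProd A (Function.update F k (X - Y)) =
      multiProd A (Function.update F k X) - multiProd A (Function.update F k Y) := by
  funext idx
  show _ = multiProd A (Function.update F k X) idx - multiProd A (Function.update F k Y) idx
  unfold multiProd
  rw [← Finset.sum_sub_distrib]
  refine Finset.sum_congr rfl fun jdx _ => ?_
  rw [prod_split_ne (k := k), prod_split_ne (k := k), prod_split_ne (k := k)]
  simp only [Function.update_self]
  have hoff : ∀ (W : Matrix (Fin (n k)) (Fin (n k)) ℝ) (i : {i : Fin d // i ≠ k}),
      Function.update F k W i.1 (idx i.1) (jdx i.1) = F i.1 (idx i.1) (jdx i.1) := by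
    intro W i
    rw [Function.update_of_ne i.2]
  rw [Finset.prod_congr rfl (fun i _ => hoff (X - Y) i),
    Finset.prod_congr rfl (fun i _ => hoff X i),
    Finset.prod_congr rfl (fun i _ => hoff Y i), Matrix.sub_apply]
  ring

end SqFam


section SOrth

lemma S_orth {nk rk : ℕ} (Q : Matrix (Fin nk) (Fin rk) ℝ) (hQ : Qᵀ * Q = 1) :
    (1 - (Q * Qᵀ + Q * Qᵀ))ᵀ * (1 - (Q * Qᵀ + Q * Qᵀ)) = 1 := by
  have hQ' : ∀ (Z : Matrix (Fin rk) (Fin nk) ℝ), Qᵀ * (Q * Z) = Z := by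
    intro Z; rw [← Matrix.mul_assoc, hQ, Matrix.one_mul]
  simp only [Matrix.transpose_sub, Matrix.transpose_add, Matrix.transpose_mul,
    Matrix.transpose_transpose, Matrix.transpose_one, Matrix.mul_sub, Matrix.sub_mul,
    Matrix.mul_add, Matrix.add_mul, Matrix.one_mul, Matrix.mul_one, Matrix.mul_assoc, hQ']
  abel

lemma spec_castId_le {a b : ℕ} (h : a = b) : spec (castId : Matrix (Fin a) (Fin b) ℝ) ≤ 1 := by
  subst h
  rw [castId_refl]
  exact spec_orth_le 1 (by simp)

lemma frobM_nonneg {m n : Type*} [Fintype m] [Fintype n] (A : Matrix m n ℝ) : 0 ≤ frobM A :=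
  Real.sqrt_nonneg _

end SOrth

section Main
variable {d : ℕ}

noncomputable def Mk (n r ℓ : Fin d → ℕ)
    (Qp : ∀ k : Fin d, Matrix (Fin (n k)) (Fin (n k - r k)) ℝ) (k : Fin d) :
    Matrix (Fin (n k - r k)) (Fin (gdim n r ℓ k k)) ℝ :=
  (Qp k)ᵀ * (castId : Matrix (Fin (n k)) (Fin (gdim n r ℓ k k)) ℝ)

noncomputable def SSm (n r ℓ : Fin d → ℕ)
    (Y : ∀ i, Matrix (Fin (n i)) (Fin (r i + ℓ i)) ℝ)
    (Q : ∀ k : Fin d, Matrix (Fin (n k)) (Fin (r k)) ℝ)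
    (H : ∀ k : Fin d, Matrix (Fin (r k)) (Fin (r k + ℓ k)) ℝ) (k : Fin d) :
    Matrix (Fin (n k)) (Fin (n k)) ℝ :=
  (1 - (Q k * (Q k)ᵀ + Q k * (Q k)ᵀ)) * (1 + Q k * H k * (Y k)ᵀ)

noncomputable def Bfam (n r ℓ : Fin d → ℕ)
    (Y : ∀ i, Matrix (Fin (n i)) (Fin (r i + ℓ i)) ℝ)
    (Q : ∀ k : Fin d, Matrix (Fin (n k)) (Fin (r k)) ℝ)
    (Qp : ∀ k : Fin d, Matrix (Fin (n k)) (Fin (n k - r k)) ℝ)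
    (H : ∀ k : Fin d, Matrix (Fin (r k)) (Fin (r k + ℓ k)) ℝ) (k : Fin d) :
    ∀ i, Matrix (Fin (n i)) (Fin (dimAt (gdim n r ℓ k) k (n k - r k) i)) ℝ :=
  fun i => Matrix.of fun a b =>
    if h : i = k then (SSm n r ℓ Y Q H k * Qp k) (Fin.cast (congrArg n h) a)
        (Fin.cast (dimAt_k h) b)
    else if h2 : (i : ℕ) < (k : ℕ) then
      (Q i * H i) a (Fin.cast (by simp [dimAt_ne h, gdim, h2]) b)
    else if (a : ℕ) = (b : ℕ) then 1 else 0

variable {n r ℓ : Fin d → ℕ} {Y : ∀ i, Matrix (Fin (n i)) (Fin (r i + ℓ i)) ℝ}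
  {Q : ∀ k : Fin d, Matrix (Fin (n k)) (Fin (r k)) ℝ}
  {Qp : ∀ k : Fin d, Matrix (Fin (n k)) (Fin (n k - r k)) ℝ}
  {H : ∀ k : Fin d, Matrix (Fin (r k)) (Fin (r k + ℓ k)) ℝ} {k : Fin d}

lemma gdim_lt {i : Fin d} (h2 : (i : ℕ) < (k : ℕ)) : gdim n r ℓ k i = r i + ℓ i := if_pos h2

lemma gdim_ge {i : Fin d} (h2 : ¬ (i : ℕ) < (k : ℕ)) : gdim n r ℓ k i = n i := if_neg h2

lemma Bfam_at_k : Bfam n r ℓ Y Q Qp H k k = (SSm n r ℓ Y Q H k * Qp k) *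
    (castId : Matrix (Fin (n k - r k)) (Fin (dimAt (gdim n r ℓ k) k (n k - r k) k)) ℝ) := by
  rw [mul_castId (dimAt_k rfl).symm]
  ext a b
  show (if h : k = k then (SSm n r ℓ Y Q H k * Qp k) (Fin.cast (congrArg n h) a)
      (Fin.cast (dimAt_k h) b) else _) = _
  rw [dif_pos rfl, Matrix.submatrix_apply]
  congr 1
  all_goals exact Fin.ext (by simp)

lemma Bfam_lt {i : Fin d} (h : i ≠ k) (h2 : (i : ℕ) < (k : ℕ)) :
    Bfam n r ℓ Y Q Qp H k i = (Q i * H i) *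
      (castId : Matrix (Fin (r i + ℓ i)) (Fin (dimAt (gdim n r ℓ k) k (n k - r k) i)) ℝ) := by
  rw [mul_castId (by simp [dimAt_ne h, gdim, h2])]
  ext a b
  show (if hh : i = k then _ else if hh2 : (i : ℕ) < (k : ℕ) then
      (Q i * H i) a (Fin.cast (by simp [dimAt_ne h, gdim, h2]) b) else _) = _
  rw [dif_neg h, dif_pos h2, Matrix.submatrix_apply]
  rfl

lemma Bfam_gt {i : Fin d} (h : i ≠ k) (h2 : ¬ (i : ℕ) < (k : ℕ)) :
    Bfam n r ℓ Y Q Qp H k i = castId := by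
  ext a b
  show (if hh : i = k then _ else if hh2 : (i : ℕ) < (k : ℕ) then _
      else if (a : ℕ) = (b : ℕ) then (1:ℝ) else 0) = _
  rw [dif_neg h, dif_neg h2]
  rfl

lemma sketchFam_lt {i : Fin d} (h2 : (i : ℕ) < (k : ℕ)) :
    sketchFam n r ℓ Y k i =
      (castId : Matrix (Fin (gdim n r ℓ k i)) (Fin (r i + ℓ i)) ℝ) * (Y i)ᵀ := by
  rw [castId_mul (gdim_lt h2)]
  ext a b
  show (if h : (i : ℕ) < (k : ℕ) then Y i b (Fin.cast (if_pos h) a) else _) = _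
  rw [dif_pos h2, Matrix.submatrix_apply, Matrix.transpose_apply]
  rfl

lemma sketchFam_ge {i : Fin d} (h2 : ¬ (i : ℕ) < (k : ℕ)) :
    sketchFam n r ℓ Y k i = castId := by
  ext a b
  show (if h : (i : ℕ) < (k : ℕ) then Y i b (Fin.cast (if_pos h) a)
      else if (a : ℕ) = (b : ℕ) then (1:ℝ) else 0) = _
  rw [dif_neg h2]
  rfl

lemma famAt_ne_k {g : Fin d → ℕ} {q : ℕ} (M : Matrix (Fin q) (Fin (g k)) ℝ)
    {i : Fin d} (h : i ≠ k) : famAt k M i = castId := by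
  ext a b
  show (if hh : i = k then _ else if (a : ℕ) = (b : ℕ) then (1:ℝ) else 0) = _
  rw [dif_neg h]
  rfl

lemma famAt_at_k {g : Fin d → ℕ} {q : ℕ} (M : Matrix (Fin q) (Fin (g k)) ℝ) :
    famAt k M k = (castId : Matrix (Fin (dimAt g k q k)) (Fin q) ℝ) * M := by
  rw [castId_mul (dimAt_k rfl)]
  ext a b
  show (if h : k = k then M (Fin.cast (dimAt_k h) a) (Fin.cast (congrArg g h) b) else _) = _
  rw [dif_pos rfl, Matrix.submatrix_apply]
  congr 1
  all_goals exact Fin.ext (by simp)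

end Main

theorem stmt13 {d : ℕ} (n r ℓ : Fin d → ℕ) (A : Tensor n)
    (Y : ∀ i, Matrix (Fin (n i)) (Fin (r i + ℓ i)) ℝ)
    (X : ∀ k : Fin d, Matrix ((i : {i : Fin d // i ≠ k}) → Fin (gdim n r ℓ k i)) (Fin (r k)) ℝ)
    (Q : ∀ k : Fin d, Matrix (Fin (n k)) (Fin (r k)) ℝ)
    (Qp : ∀ k : Fin d, Matrix (Fin (n k)) (Fin (n k - r k)) ℝ)
    (G : ∀ k : Fin d, Matrix (Fin (r k)) (Fin (r k + ℓ k)) ℝ)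
    (H : ∀ k : Fin d, Matrix (Fin (r k)) (Fin (r k + ℓ k)) ℝ)
    (hQorth : ∀ k, (Q k)ᵀ * Q k = 1)
    (hQR : ∀ k, ∃ Rk : Matrix (Fin (r k)) (Fin (r k)) ℝ,
      IsUnit Rk ∧ AIY n r ℓ A Y k * X k = Q k * Rk)
    (hQp : ∀ k, (Qp k)ᵀ * Qp k = 1)
    (hcompl : ∀ k, Q k * (Q k)ᵀ + Qp k * (Qp k)ᵀ = 1)
    (hG : ∀ k, IsMP ((Y k)ᵀ * (AIY n r ℓ A Y k * X k)) (G k))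
    (hrank : ∀ k, ((Y k)ᵀ * (AIY n r ℓ A Y k * X k)).rank = r k)
    (hH : ∀ k, IsMP ((Y k)ᵀ * Q k) (H k)) :
    frobT (A - applyUpTo (fun k => AIY n r ℓ A Y k * X k * G k * (Y k)ᵀ) A d) ≤
      ∑ k : Fin d, frobM ((Qp k)ᵀ * AIY n r ℓ A Y k) *
        spec (1 + Q k * H k * (Y k)ᵀ) *
        ∏ i ∈ Finset.univ.filter (fun i => i < k), spec (H i) := by
  classical
  set P : ∀ k : Fin d, Matrix (Fin (n k)) (Fin (n k)) ℝ :=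
    fun k => AIY n r ℓ A Y k * X k * G k * (Y k)ᵀ with hPdef
  have hPQ : ∀ k, P k = Q k * H k * (Y k)ᵀ ∧ H k * ((Y k)ᵀ * Q k) = 1 := by
    intro k
    obtain ⟨Rk, hRk, hQRk⟩ := hQR k
    exact P_eq (AIY n r ℓ A Y k * X k) (Y k) (Q k) Rk (G k) (H k) hQRk hRk (hG k) (hH k)
      (hrank k)
  have main : ∀ k : Fin d,
      frobT (applyUpTo P A (k : ℕ) - applyUpTo P A ((k : ℕ) + 1)) ≤
      frobM ((Qp k)ᵀ * AIY n r ℓ A Y k) * spec (1 + Q k * H k * (Y k)ᵀ) *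
        ∏ i ∈ Finset.univ.filter (fun i => i < k), spec (H i) := by
    intro k
    have hstep : applyUpTo P A ((k : ℕ) + 1) =
        multiProd A (Function.update
          (fun i : Fin d => if (i : ℕ) < (k : ℕ) then P i else 1) k (P k)) := by
      rw [applyUpTo_eq]
      have hfm : (fun i : Fin d => if (i : ℕ) < (k : ℕ) + 1 then P i else 1) =
          Function.update (fun i : Fin d => if (i : ℕ) < (k : ℕ) then P i else 1) k (P k) := by
        funext i
        by_cases h : i = k
        · subst h
          rw [Function.update_self, if_pos (Nat.lt_succ_self _)]
        · rw [Function.update_of_ne h]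
          have hv : (i : ℕ) ≠ (k : ℕ) := fun hc => h (Fin.ext hc)
          by_cases h2 : (i : ℕ) < (k : ℕ)
          · rw [if_pos (by omega), if_pos h2]
          · rw [if_neg (by omega), if_neg h2]
      rw [hfm]
    have hterm : applyUpTo P A (k : ℕ) - applyUpTo P A ((k : ℕ) + 1) =
        multiProd A (Function.update
          (fun i : Fin d => if (i : ℕ) < (k : ℕ) then P i else 1) k (1 - P k)) := by
      rw [applyUpTo_eq, hstep, multiProd_update_sub]
      have hupd : Function.update (fun i : Fin d => if (i : ℕ) < (k : ℕ) then P i else 1) k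
          (1 : Matrix (Fin (n k)) (Fin (n k)) ℝ) =
          (fun i : Fin d => if (i : ℕ) < (k : ℕ) then P i else 1) := by
        rw [show (1 : Matrix (Fin (n k)) (Fin (n k)) ℝ) =
          (if ((k : ℕ) < (k : ℕ)) then P k else 1) from (if_neg (lt_irrefl _)).symm]
        exact Function.update_eq_self k _
      rw [hupd]
    have hfam : Function.update (fun i : Fin d => if (i : ℕ) < (k : ℕ) then P i else 1) k
        (1 - P k) =
        fun i => Bfam n r ℓ Y Q Qp H k i *
          (famAt k (Mk n r ℓ Qp k) i * sketchFam n r ℓ Y k i) := by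
      funext i
      by_cases h : i = k
      · subst h
        rw [Function.update_self, Bfam_at_k, famAt_at_k, sketchFam_ge (lt_irrefl _),
          (hPQ i).1]
        show _ = ((SSm n r ℓ Y Q H i * Qp i) * castId) * ((castId * ((Qp i)ᵀ * castId)) * castId)
        symm
        simp only [SSm, Matrix.mul_assoc]
        rw [castId_mul_castId_cancel (gdim_ge (lt_irrefl _)).symm, Matrix.mul_one,
          castId_mul_castId_mul (dimAt_k (k := i) rfl).symm, castId_refl, Matrix.one_mul,
          show Qp i * (Qp i)ᵀ = 1 - Q i * (Q i)ᵀ from eq_sub_of_add_eq' (hcompl i)]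
        exact S_identity (Q i) (H i * (Y i)ᵀ) (hQorth i)
          (by rw [Matrix.mul_assoc]; exact (hPQ i).2)
      · rw [Function.update_of_ne h, famAt_ne_k _ h]
        by_cases h2 : (i : ℕ) < (k : ℕ)
        · rw [if_pos h2, Bfam_lt h h2, sketchFam_lt h2, (hPQ i).1]
          symm
          simp only [Matrix.mul_assoc]
          rw [castId_mul_castId_mul (by simp [dimAt_ne h, gdim, h2] :
              r i + ℓ i = dimAt (gdim n r ℓ k) k (n k - r k) i),
            castId_mul_castId_mul (gdim_lt h2).symm, castId_refl, Matrix.one_mul]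
        · rw [if_neg h2, Bfam_gt h h2, sketchFam_ge h2]
          symm
          rw [castId_mul_castId_mul ((dimAt_ne h).trans (gdim_ge h2)).symm,
            castId_mul_castId_cancel (gdim_ge h2).symm]
    have hb2 : frobT (multiProd (multiProd A (sketchFam n r ℓ Y k)) (famAt k (Mk n r ℓ Qp k)))
        = frobM ((Qp k)ᵀ * AIY n r ℓ A Y k) := by
      rw [frobT_famAt]
      congr 1
      rw [show Mk n r ℓ Qp k = (Qp k)ᵀ * (castId : Matrix (Fin (n k)) (Fin (gdim n r ℓ k k)) ℝ) from rfl, Matrix.mul_assoc,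
        castId_mul (gdim_ge (lt_irrefl _)).symm]
      rfl
    have hBk : spec (Bfam n r ℓ Y Q Qp H k k) ≤ spec (1 + Q k * H k * (Y k)ᵀ) := by
      rw [Bfam_at_k]
      calc spec ((SSm n r ℓ Y Q H k * Qp k) * castId)
          ≤ spec (SSm n r ℓ Y Q H k * Qp k) * spec castId := spec_mul_le _ _
        _ ≤ spec (SSm n r ℓ Y Q H k * Qp k) * 1 :=
            mul_le_mul_of_nonneg_left (spec_castId_le (dimAt_k rfl).symm) (spec_nonneg _)
        _ = spec (SSm n r ℓ Y Q H k * Qp k) := mul_one _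
        _ ≤ spec (SSm n r ℓ Y Q H k) * spec (Qp k) := spec_mul_le _ _
        _ ≤ spec (SSm n r ℓ Y Q H k) * 1 :=
            mul_le_mul_of_nonneg_left (spec_orth_le _ (hQp k)) (spec_nonneg _)
        _ = spec ((1 - (Q k * (Q k)ᵀ + Q k * (Q k)ᵀ)) * (1 + Q k * H k * (Y k)ᵀ)) :=
            mul_one _
        _ ≤ spec (1 - (Q k * (Q k)ᵀ + Q k * (Q k)ᵀ)) * spec (1 + Q k * H k * (Y k)ᵀ) :=
            spec_mul_le _ _
        _ ≤ 1 * spec (1 + Q k * H k * (Y k)ᵀ) :=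
            mul_le_mul_of_nonneg_right (spec_orth_le _ (S_orth (Q k) (hQorth k)))
              (spec_nonneg _)
        _ = spec (1 + Q k * H k * (Y k)ᵀ) := one_mul _
    have hBlt : ∀ i : Fin d, i ≠ k → (i : ℕ) < (k : ℕ) →
        spec (Bfam n r ℓ Y Q Qp H k i) ≤ spec (H i) := by
      intro i hik h2
      rw [Bfam_lt hik h2]
      calc spec ((Q i * H i) * castId)
          ≤ spec (Q i * H i) * spec castId := spec_mul_le _ _
        _ ≤ spec (Q i * H i) * 1 :=
            mul_le_mul_of_nonneg_left
              (spec_castId_le (by simp [dimAt_ne hik, gdim, h2])) (spec_nonneg _)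
        _ = spec (Q i * H i) := mul_one _
        _ ≤ spec (Q i) * spec (H i) := spec_mul_le _ _
        _ ≤ 1 * spec (H i) :=
            mul_le_mul_of_nonneg_right (spec_orth_le _ (hQorth i)) (spec_nonneg _)
        _ = spec (H i) := one_mul _
    have hBgt : ∀ i : Fin d, i ≠ k → ¬ (i : ℕ) < (k : ℕ) →
        spec (Bfam n r ℓ Y Q Qp H k i) ≤ 1 := by
      intro i hik h2
      rw [Bfam_gt hik h2]
      exact spec_castId_le ((dimAt_ne hik).trans (gdim_ge h2)).symm
    have hprod : ∏ i, spec (Bfam n r ℓ Y Q Qp H k i) ≤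
        spec (1 + Q k * H k * (Y k)ᵀ) *
          ∏ i ∈ Finset.univ.filter (fun i => i < k), spec (H i) := by
      rw [← Finset.mul_prod_erase Finset.univ _ (Finset.mem_univ k)]
      have h2 : ∏ i ∈ Finset.univ.erase k, spec (Bfam n r ℓ Y Q Qp H k i) ≤
          ∏ i ∈ Finset.univ.erase k, (if i < k then spec (H i) else 1) := by
        refine Finset.prod_le_prod (fun i _ => spec_nonneg _) (fun i hi => ?_)
        have hik : i ≠ k := (Finset.mem_erase.mp hi).1
        by_cases hlt : (i : ℕ) < (k : ℕ)
        · rw [if_pos (Fin.lt_def.mpr hlt)]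
          exact hBlt i hik hlt
        · rw [if_neg (fun hc => hlt (Fin.lt_def.mp hc))]
          exact hBgt i hik hlt
      have h3 : ∏ i ∈ Finset.univ.erase k, (if i < k then spec (H i) else 1) =
          ∏ i ∈ Finset.univ.filter (fun i => i < k), spec (H i) := by
        rw [Finset.prod_erase (f := fun i : Fin d => if i < k then spec (H i) else 1)
          Finset.univ (if_neg (lt_irrefl k)), ← Finset.prod_filter]
      rw [← h3]
      exact mul_le_mul hBk h2 (Finset.prod_nonneg (fun i _ => spec_nonneg _))
        (spec_nonneg _)
    rw [hterm, hfam, ← multiProd_multiProd, ← multiProd_multiProd]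
    calc frobT (multiProd (multiProd (multiProd A (sketchFam n r ℓ Y k))
          (famAt k (Mk n r ℓ Qp k))) (Bfam n r ℓ Y Q Qp H k))
        ≤ (∏ i, spec (Bfam n r ℓ Y Q Qp H k i)) *
            frobT (multiProd (multiProd A (sketchFam n r ℓ Y k)) (famAt k (Mk n r ℓ Qp k))) :=
          frobT_multiProd_le _ _
      _ = (∏ i, spec (Bfam n r ℓ Y Q Qp H k i)) * frobM ((Qp k)ᵀ * AIY n r ℓ A Y k) := by
          rw [hb2]
      _ ≤ (spec (1 + Q k * H k * (Y k)ᵀ) *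
            ∏ i ∈ Finset.univ.filter (fun i => i < k), spec (H i)) *
            frobM ((Qp k)ᵀ * AIY n r ℓ A Y k) :=
          mul_le_mul_of_nonneg_right hprod (frobM_nonneg _)
      _ = frobM ((Qp k)ᵀ * AIY n r ℓ A Y k) * spec (1 + Q k * H k * (Y k)ᵀ) *
            ∏ i ∈ Finset.univ.filter (fun i => i < k), spec (H i) := by ring
  calc frobT (A - applyUpTo P A d)
      = frobT (∑ m ∈ Finset.range d, (applyUpTo P A m - applyUpTo P A (m + 1))) := by
        rw [Finset.sum_range_sub' (fun m => applyUpTo P A m) d]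
        rfl
    _ ≤ ∑ m ∈ Finset.range d, frobT (applyUpTo P A m - applyUpTo P A (m + 1)) :=
        frobT_sum_le _
    _ = ∑ k : Fin d, frobT (applyUpTo P A (k : ℕ) - applyUpTo P A ((k : ℕ) + 1)) :=
        (Fin.sum_univ_eq_sum_range (fun m => frobT (applyUpTo P A m - applyUpTo P A (m + 1)))
          d).symm
    _ ≤ ∑ k : Fin d, frobM ((Qp k)ᵀ * AIY n r ℓ A Y k) * spec (1 + Q k * H k * (Y k)ᵀ) *
          ∏ i ∈ Finset.univ.filter (fun i => i < k), spec (H i) :=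
        Finset.sum_le_sum (fun k _ => main k)
end

section
/- If M = AB where A has full column rank and B is invertible, and M = QR is an economy QR factorization with R invertible, then M R^{-1} = Q has orthonormal columns and M (Y^T M)^† = Q (Y^T Q)^† for any Y with Y^T Q of full column rank. -/
open Matrix

-- Uniqueness of Moore-Penrose pseudoinverse
lemma mp_unique_s14 {m n : Type*} [Fintype m] [Fintype n]
    (A : Matrix m n ℝ) (X Y : Matrix n m ℝ)
    (hX : A * X * A = A ∧ X * A * X = X ∧ (A * X)ᵀ = A * X ∧ (X * A)ᵀ = X * A)
    (hY : A * Y * A = A ∧ Y * A * Y = Y ∧ (A * Y)ᵀ = A * Y ∧ (Y * A)ᵀ = Y * A) :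
    X = Y := by
  obtain ⟨hX1, hX2, hX3, hX4⟩ := hX
  obtain ⟨hY1, hY2, hY3, hY4⟩ := hY
  have hAX : A * X = A * Y := by
    calc A * X = (A * X)ᵀ := hX3.symm
    _ = Xᵀ * Aᵀ := by rw [transpose_mul]
    _ = Xᵀ * (A * Y * A)ᵀ := by rw [hY1]
    _ = Xᵀ * (Aᵀ * (A * Y)ᵀ) := by rw [transpose_mul]
    _ = (Xᵀ * Aᵀ) * (A * Y) := by rw [hY3, Matrix.mul_assoc]
    _ = (A * X)ᵀ * (A * Y) := by rw [transpose_mul]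
    _ = A * X * (A * Y) := by rw [hX3]
    _ = A * (X * A) * Y := by rw [Matrix.mul_assoc, Matrix.mul_assoc, Matrix.mul_assoc]
    _ = A * X * A * Y := by rw [Matrix.mul_assoc A X A]
    _ = A * Y := by rw [hX1]
  have hXA : X * A = Y * A := by
    calc X * A = (X * A)ᵀ := hX4.symm
    _ = Aᵀ * Xᵀ := by rw [transpose_mul]
    _ = (A * Y * A)ᵀ * Xᵀ := by rw [hY1]
    _ = ((Y * A)ᵀ * Aᵀ) * Xᵀ := by
        rw [show A * Y * A = A * (Y * A) by rw [Matrix.mul_assoc], transpose_mul]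
    _ = (Y * A) * (Aᵀ * Xᵀ) := by rw [hY4, Matrix.mul_assoc]
    _ = (Y * A) * (X * A)ᵀ := by rw [transpose_mul]
    _ = Y * A * (X * A) := by rw [hX4]
    _ = Y * (A * X * A) := by rw [Matrix.mul_assoc, Matrix.mul_assoc]
    _ = Y * A := by rw [hX1]
  calc X = X * A * X := hX2.symm
  _ = X * (A * Y) := by rw [Matrix.mul_assoc, hAX]
  _ = (X * A) * Y := by rw [Matrix.mul_assoc]
  _ = Y * A * Y := by rw [hXA]
  _ = Y := hY2

-- idempotent full-rank square matrix is identity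
lemma idem_full_rank_eq_one_s14 {r : ℕ} (P : Matrix (Fin r) (Fin r) ℝ)
    (hP : P * P = P) (hrk : P.rank = r) : P = 1 := by
  have hrange : LinearMap.range P.mulVecLin = ⊤ := by
    apply Submodule.eq_top_of_finrank_eq
    simpa [Matrix.rank] using hrk
  have hid : ∀ v : Fin r → ℝ, P.mulVec v = v := by
    intro v
    obtain ⟨w, hw⟩ := LinearMap.range_eq_top.mp hrange v
    rw [Matrix.mulVecLin_apply] at hw
    rw [← hw, Matrix.mulVec_mulVec, hP]
  ext i j
  have := congrFun (hid (Pi.single j 1)) i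
  rw [Matrix.mulVec_single_one] at this
  simp only [col_apply] at this
  rw [this]
  by_cases h : i = j <;> simp [h, Matrix.one_apply, Pi.single_apply]

theorem stmt14 (m r : ℕ)
    (A : Matrix (Fin m) (Fin r) ℝ) (B : Matrix (Fin r) (Fin r) ℝ)
    (Q : Matrix (Fin m) (Fin r) ℝ) (R : Matrix (Fin r) (Fin r) ℝ)
    (hA : A.rank = r) (hB : IsUnit B)
    (hQR : A * B = Q * R) (hQ : Qᵀ * Q = 1) (hR : IsUnit R) :
    (A * B * R⁻¹ = Q ∧ (A * B * R⁻¹)ᵀ * (A * B * R⁻¹) = 1) ∧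
      ∀ (s : ℕ) (Y : Matrix (Fin m) (Fin s) ℝ) (G1 G2 : Matrix (Fin r) (Fin s) ℝ),
        IsMP (Yᵀ * (A * B)) G1 → IsMP (Yᵀ * Q) G2 → (Yᵀ * Q).rank = r →
        A * B * G1 = Q * G2 := by
  have hRdet : IsUnit R.det := (Matrix.isUnit_iff_isUnit_det R).mp hR
  have hRR : R * R⁻¹ = 1 := Matrix.mul_nonsing_inv R hRdet
  have hRR' : R⁻¹ * R = 1 := Matrix.nonsing_inv_mul R hRdet
  have hQ1 : A * B * R⁻¹ = Q := by
    rw [hQR, Matrix.mul_assoc, hRR, Matrix.mul_one]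
  refine ⟨⟨hQ1, by rw [hQ1, hQ]⟩, ?_⟩
  intro s Y G1 G2 hG1 hG2 hrk
  obtain ⟨C, hC⟩ : ∃ C, C = Yᵀ * Q := ⟨_, rfl⟩
  rw [← hC] at hG2 hrk
  obtain ⟨h1, h2, h3, h4⟩ := hG2
  -- G2 * C = 1
  have hP : G2 * C * (G2 * C) = G2 * C := by
    calc G2 * C * (G2 * C) = (G2 * C * G2) * C := by rw [Matrix.mul_assoc, Matrix.mul_assoc, Matrix.mul_assoc]
    _ = G2 * C := by rw [h2]
  have hPrk : (G2 * C).rank = r := by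
    refine le_antisymm ((G2 * C).rank_le_card_width.trans (by simp)) ?_
    calc r = C.rank := hrk.symm
    _ = (C * (G2 * C)).rank := by rw [← Matrix.mul_assoc, h1]
    _ ≤ (G2 * C).rank := Matrix.rank_mul_le_right C (G2 * C)
  have hPone : G2 * C = 1 := idem_full_rank_eq_one_s14 _ hP hPrk
  -- R⁻¹ * G2 is the MP of Yᵀ * (A*B) = C * R
  have hD : Yᵀ * (A * B) = C * R := by rw [hQR, hC, ← Matrix.mul_assoc]
  have hMP2 : IsMP (Yᵀ * (A * B)) (R⁻¹ * G2) := by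
    rw [hD]
    refine ⟨?_, ?_, ?_, ?_⟩
    · calc C * R * (R⁻¹ * G2) * (C * R) = C * (R * R⁻¹) * G2 * (C * R) := by
            simp only [Matrix.mul_assoc]
      _ = (C * G2 * C) * R := by rw [hRR, Matrix.mul_one]; simp only [Matrix.mul_assoc]
      _ = C * R := by rw [h1]
    · calc R⁻¹ * G2 * (C * R) * (R⁻¹ * G2) = R⁻¹ * (G2 * C) * (R * R⁻¹) * G2 := by
            simp only [Matrix.mul_assoc]
      _ = R⁻¹ * (G2 * C * G2) := by rw [hRR, Matrix.mul_one]; simp only [Matrix.mul_assoc]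
      _ = R⁻¹ * G2 := by rw [h2]
    · have : C * R * (R⁻¹ * G2) = C * G2 := by
        rw [Matrix.mul_assoc, ← Matrix.mul_assoc R, hRR, Matrix.one_mul]
      rw [this, h3]
    · have : R⁻¹ * G2 * (C * R) = 1 := by
        rw [Matrix.mul_assoc, ← Matrix.mul_assoc G2, hPone, Matrix.one_mul, hRR']
      rw [this, Matrix.transpose_one]
  have hG1eq : G1 = R⁻¹ * G2 := mp_unique_s14 _ _ _ hG1 hMP2
  rw [hG1eq, hQR]
  calc Q * R * (R⁻¹ * G2) = Q * (R * R⁻¹) * G2 := by simp only [Matrix.mul_assoc]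
  _ = Q * G2 := by rw [hRR, Matrix.mul_one]
end

section
/- Let A ∈ ℝ^{n₁×⋯×n_d} have multilinear rank (r₁,…,r_d), i.e., rank(A_{(k)}) = r_k for each k. Suppose the SMLN sketching matrices X_k, Y_k are such that each Y_k^T A_{(k)}(I ⊗ Y_{⊗<k}) X_k has rank r_k and each A_{(k)}(I ⊗ Y_{⊗<k}) X_k has rank r_k. Then the SMLN approximant (A ×_{k=1}^d Y_k^T) ×_{k=1}^d [A_{(k)}(I ⊗ Y_{⊗<k}) X_k (Y_k^T A_{(k)}(I ⊗ Y_{⊗<k}) X_k)^†] equals A exactly. -/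
open Matrix

lemma factor_through {m p q : Type*} [Fintype m] [Fintype p] [Fintype q] [DecidableEq p] [DecidableEq q]
    (M : Matrix m p ℝ) (B : Matrix m q ℝ)
    (h : LinearMap.range B.mulVecLin ≤ LinearMap.range M.mulVecLin) :
    ∃ C : Matrix p q ℝ, B = M * C := by
  have hc : ∀ j : q, ∃ v : p → ℝ, M.mulVec v = fun a => B a j := by
    intro j
    have hmem : (fun a => B a j) ∈ LinearMap.range B.mulVecLin :=
      ⟨Pi.single j 1, by ext a; simp [Matrix.mulVecLin, Matrix.mulVec, dotProduct, Pi.single_apply]⟩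
    exact h hmem
  choose v hv using hc
  refine ⟨fun i j => v j i, ?_⟩
  ext a j
  have := congrFun (hv j) a
  show B a j = ∑ x, M a x * v j x
  simpa [Matrix.mulVec, dotProduct, Matrix.mul_apply] using this.symm

lemma range_mul_le {m p q : Type*} [Fintype m] [Fintype p] [Fintype q]
    (M : Matrix m p ℝ) (C : Matrix p q ℝ) :
    LinearMap.range (M * C).mulVecLin ≤ LinearMap.range M.mulVecLin := by
  rw [Matrix.mulVecLin_mul]
  exact LinearMap.range_comp_le_range _ _

lemma ker_eq_of_rank {m m' p : Type*} [Fintype m] [Fintype m'] [Fintype p] [DecidableEq p]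
    (Yt : Matrix m' m ℝ) (M : Matrix m p ℝ)
    (hr : (Yt * M).rank = M.rank) :
    LinearMap.ker (Yt * M).mulVecLin = LinearMap.ker M.mulVecLin := by
  have hle : LinearMap.ker M.mulVecLin ≤ LinearMap.ker (Yt * M).mulVecLin := by
    rw [Matrix.mulVecLin_mul]
    exact LinearMap.ker_le_ker_comp _ _
  symm
  apply Submodule.eq_of_le_of_finrank_le hle
  have h1 := LinearMap.finrank_range_add_finrank_ker (Yt * M).mulVecLin
  have h2 := LinearMap.finrank_range_add_finrank_ker M.mulVecLin
  unfold Matrix.rank at hr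
  omega

lemma mul_proj_eq {m m' p r : Type*} [Fintype m] [Fintype m'] [Fintype p] [Fintype r] [DecidableEq p]
    (M : Matrix m p ℝ) (N : Matrix m' p ℝ) (G : Matrix p m' ℝ)
    (hker : LinearMap.ker N.mulVecLin = LinearMap.ker M.mulVecLin)
    (hNGN : N * G * N = N) (B : Matrix p r ℝ) :
    M * (G * N * B) = M * B := by
  ext a j
  have hcol : ∀ v : p → ℝ, N.mulVec v = 0 → M.mulVec v = 0 := by
    intro v hv
    have : v ∈ LinearMap.ker N.mulVecLin := by simpa [Matrix.mulVecLin] using hv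
    rw [hker] at this
    simpa [Matrix.mulVecLin] using this
  set v : p → ℝ := fun i => (G * N * B) i j - B i j with hvdef
  have hNv : N.mulVec v = 0 := by
    ext b
    have : (N * (G * N * B)) b j = (N * B) b j := by
      rw [← Matrix.mul_assoc, ← Matrix.mul_assoc, hNGN]
    simp only [Matrix.mulVec, dotProduct, hvdef, mul_sub, Finset.sum_sub_distrib]
    simp only [Matrix.mul_apply] at this
    simpa [Pi.zero_apply, Matrix.mul_apply] using sub_eq_zero.mpr this
  have hMv := congrFun (hcol v hNv) a
  simp only [Matrix.mulVec, dotProduct, hvdef, mul_sub, Finset.sum_sub_distrib, Pi.zero_apply] at hMv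
  have : (M * (G * N * B)) a j - (M * B) a j = 0 := by
    simpa [Matrix.mul_apply] using hMv
  linarith

lemma key_matrix {m m' p q : Type*} [Fintype m] [Fintype m'] [Fintype p] [Fintype q]
    [DecidableEq p] [DecidableEq q] [DecidableEq m]
    (M : Matrix m p ℝ) (Amat : Matrix m q ℝ) (Yt : Matrix m' m ℝ) (G : Matrix p m' ℝ)
    (hMS : ∃ S : Matrix q p ℝ, M = Amat * S)
    (hNGN : Yt * M * G * (Yt * M) = Yt * M)
    (hrM : M.rank = Amat.rank) (hrN : (Yt * M).rank = M.rank) :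
    M * G * Yt * Amat = Amat := by
  obtain ⟨S, hS⟩ := hMS
  have hle : LinearMap.range M.mulVecLin ≤ LinearMap.range Amat.mulVecLin := by
    rw [hS]; exact range_mul_le _ _
  have heq : LinearMap.range M.mulVecLin = LinearMap.range Amat.mulVecLin := by
    apply Submodule.eq_of_le_of_finrank_le hle
    unfold Matrix.rank at hrM
    omega
  obtain ⟨C, hC⟩ := factor_through M Amat heq.ge
  have hker := ker_eq_of_rank Yt M hrN
  have hproj := mul_proj_eq M (Yt * M) G hker hNGN C
  calc M * G * Yt * Amat = M * (G * (Yt * M) * C) := by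
        rw [hC]; simp [Matrix.mul_assoc]
    _ = M * C := hproj
    _ = Amat := hC.symm

lemma modeProdSq_fixed {d : ℕ} {n : Fin d → ℕ} (k : Fin d) (A : Tensor n)
    (P : Matrix (Fin (n k)) (Fin (n k)) ℝ)
    (hP : P * matricize k A = matricize k A) :
    modeProdSq k A P = A := by
  funext idx
  have h1 : ∀ j : Fin (n k),
      (fun i => if h : i = k then Fin.cast (congrArg n h).symm j else idx i)
        = Function.update idx k j := by
    intro j
    funext i
    by_cases h : i = k
    · subst h; simp [Function.update]
    · simp [h, Function.update]
  have h2 := congrFun (congrFun hP (idx k)) (fun i : {i : Fin d // i ≠ k} => idx i.1)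
  simp only [Matrix.mul_apply, matricize] at h2
  have h3 : A (fun i => if h : i = k then Fin.cast (congrArg n h).symm (idx k) else idx i)
      = A idx := by
    congr 1
    funext i
    by_cases h : i = k
    · subst h; simp
    · simp [h]
  show ∑ j, P (idx k) j * A (Function.update idx k j) = A idx
  rw [← h3, ← h2]
  apply Finset.sum_congr rfl
  intro j _
  rw [← h1 j]

lemma prod_split {β : Type*} [CommMonoid β] {α : Type*} [Fintype α] [DecidableEq α]
    (k : α) (f : α → β) : ∏ i, f i = f k * ∏ i : {i // i ≠ k}, f i.1 := by
  rw [Fintype.prod_eq_mul_prod_compl k,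
    ← Finset.prod_subtype ({k}ᶜ : Finset α) (fun x => by simp) (fun i => f i)]

lemma AIY_factor {d : ℕ} (n r ℓ : Fin d → ℕ) (A : Tensor n)
    (Y : ∀ i, Matrix (Fin (n i)) (Fin (r i + ℓ i)) ℝ) (k : Fin d) :
    AIY n r ℓ A Y k
      = matricize k A * (kronExcept k (sketchFam n r ℓ Y k))ᵀ := by
  ext a c
  simp only [AIY, matricize, multiProd, Matrix.submatrix_apply, id, Matrix.mul_apply,
    Matrix.transpose_apply, kronExcept]
  set e := Equiv.piSplitAt k (fun i => Fin (n i)) with he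
  rw [← Equiv.sum_comp e.symm, Fintype.sum_prod_type]
  have he1 : ∀ (b : Fin (n k)) (jc : ∀ i : {i // i ≠ k}, Fin (n i.1)), e.symm (b, jc) k = b := by
    intro b jc; simp [he, Equiv.piSplitAt]
  have he2 : ∀ (b : Fin (n k)) (jc : ∀ i : {i // i ≠ k}, Fin (n i.1)) (i : Fin d) (h : i ≠ k),
      e.symm (b, jc) i = jc ⟨i, h⟩ := by
    intro b jc i h; simp [he, Equiv.piSplitAt, h]
  have hprod : ∀ (b : Fin (n k)) (jc : ∀ i : {i // i ≠ k}, Fin (n i.1)),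
      (∏ i : Fin d, sketchFam n r ℓ Y k i
          (if h : i = k then Fin.cast (congrArg (gdim n r ℓ k) h).symm
              (Fin.cast (if_neg (lt_irrefl (k : ℕ))).symm a) else c ⟨i, h⟩) (e.symm (b, jc) i))
        = (if (a : ℕ) = (b : ℕ) then (1:ℝ) else 0) *
            ∏ i : {i // i ≠ k}, sketchFam n r ℓ Y k i.1 (c i) (jc i) := by
    intro b jc
    rw [prod_split k]
    congr 1
    · rw [dif_pos rfl, he1]
      simp [sketchFam, lt_irrefl]
      rfl
    · apply Finset.prod_congr rfl
      intro i _
      rw [dif_neg i.2, he2 b jc i.1 i.2]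
  calc (∑ b : Fin (n k), ∑ jc : ∀ i : {i // i ≠ k}, Fin (n i.1),
          (∏ i : Fin d, sketchFam n r ℓ Y k i
          (if h : i = k then Fin.cast (congrArg (gdim n r ℓ k) h).symm
              (Fin.cast (if_neg (lt_irrefl (k : ℕ))).symm a) else c ⟨i, h⟩) (e.symm (b, jc) i)) *
            A (e.symm (b, jc)))
      = ∑ b : Fin (n k), ∑ jc : ∀ i : {i // i ≠ k}, Fin (n i.1),
          ((if (a : ℕ) = (b : ℕ) then (1:ℝ) else 0) *
            ∏ i : {i // i ≠ k}, sketchFam n r ℓ Y k i.1 (c i) (jc i)) * A (e.symm (b, jc)) := by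
        apply Finset.sum_congr rfl; intro b _
        apply Finset.sum_congr rfl; intro jc _
        rw [hprod]
    _ = ∑ jc : ∀ i : {i // i ≠ k}, Fin (n i.1),
          (∏ i : {i // i ≠ k}, sketchFam n r ℓ Y k i.1 (c i) (jc i)) * A (e.symm (a, jc)) := by
        rw [Finset.sum_comm]
        apply Finset.sum_congr rfl; intro jc _
        simp only [Fin.val_eq_val]
        simp [ite_mul, Finset.sum_ite_eq]
    _ = ∑ jc : ∀ i : {i // i ≠ k}, Fin (n i.1),
          (A fun i => if h : i = k then Fin.cast (congrArg n h).symm a else jc ⟨i, h⟩) *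
            ∏ i : {i // i ≠ k}, sketchFam n r ℓ Y k i.1 (c i) (jc i) := by
        apply Finset.sum_congr rfl; intro jc _
        rw [mul_comm]
        congr 1
        congr 1
        funext i
        by_cases h : i = k
        · subst h; rw [he1, dif_pos rfl]; simp
        · rw [he2 a jc i h, dif_neg h]

lemma foldl_fixed {d : ℕ} {n : Fin d → ℕ} (A : Tensor n)
    (P : ∀ k : Fin d, Matrix (Fin (n k)) (Fin (n k)) ℝ)
    (h : ∀ k, modeProdSq k A (P k) = A) :
    ∀ l : List (Fin d), l.foldl (fun B i => modeProdSq i B (P i)) A = A := by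
  intro l
  induction l with
  | nil => rfl
  | cons x xs ih => simpa [List.foldl_cons, h x] using ih

theorem stmt16 {d : ℕ} (n r ℓ : Fin d → ℕ) (A : Tensor n)
    (Y : ∀ i, Matrix (Fin (n i)) (Fin (r i + ℓ i)) ℝ)
    (X : ∀ k : Fin d, Matrix ((i : {i : Fin d // i ≠ k}) → Fin (gdim n r ℓ k i)) (Fin (r k)) ℝ)
    (G : ∀ k : Fin d, Matrix (Fin (r k)) (Fin (r k + ℓ k)) ℝ)
    (hmlrank : ∀ k, (matricize k A).rank = r k)
    (hG : ∀ k, IsMP ((Y k)ᵀ * (AIY n r ℓ A Y k * X k)) (G k))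
    (hrank1 : ∀ k, ((Y k)ᵀ * (AIY n r ℓ A Y k * X k)).rank = r k)
    (hrank2 : ∀ k, (AIY n r ℓ A Y k * X k).rank = r k) :
    applyUpTo (fun k => AIY n r ℓ A Y k * X k * G k * (Y k)ᵀ) A d = A := by
  have hfix : ∀ k, modeProdSq k A (AIY n r ℓ A Y k * X k * G k * (Y k)ᵀ) = A := by
    intro k
    apply modeProdSq_fixed
    exact key_matrix (AIY n r ℓ A Y k * X k) (matricize k A) (Y k)ᵀ (G k)
      ⟨(kronExcept k (sketchFam n r ℓ Y k))ᵀ * X k, by rw [← Matrix.mul_assoc, ← AIY_factor]⟩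
      (hG k).1 ((hrank2 k).trans (hmlrank k).symm) ((hrank1 k).trans (hrank2 k).symm)
  exact foldl_fixed A _ hfix _
end
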